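/- arXiv:2408.10748 — 6 statements merged into one kernel-verified Lean document; each statement's English description precedes it below -/
import Mathlib

section
/- Let ρ be a geodesic in a graph X, let x₀ ∈ ρ be a vertex at distance at least 5R from both endpoints of ρ, and let K ≥ 0 with K < R. If ρ' is another geodesic with ρ ⊂ ρ', then the set N_R(x₀) \ N_K(ρ) equals N_R(x₀) \ N_K(ρ'). -/
/-!
When `d(x, ρ') ≤ K < R`, only the points of `ρ'` within `R` of `x` matter for `d(x, ρ')`. For
`x ∈ N_R(x₀)` these lie within `2R` of `x₀`, and along the geodesic `ρ'` they cannot get past the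
endpoints of `ρ`, which are `5R` away from `x₀`; so they lie on `ρ` and `d(x, ρ) = d(x, ρ')`.
-/

open Set Metric

/-- `f` restricted to the integer interval `[a, b]` is a geodesic in the graph `X`
(with its integer-valued path metric, viewed as a metric space). -/
def IsGeodesicOn {X : Type*} [MetricSpace X] (f : ℤ → X) (a b : ℤ) : Prop :=
  ∀ m ∈ Icc a b, ∀ n ∈ Icc a b, dist (f m) (f n) = |(m : ℝ) - n|

theorem Metric.infDist_le_of_forall_dist_lt_mem {α : Type*} [PseudoMetricSpace α] {x : α}
    {s t : Set α} {r : ℝ} (htne : t.Nonempty) (hnear : ∀ y ∈ t, dist x y < r → y ∈ s)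
    (ht : infDist x t < r) : infDist x s ≤ infDist x t := by
  refine le_of_forall_pos_lt_add fun ε hε => ?_
  obtain ⟨y, hyt, hxy⟩ := (infDist_lt_iff htne).1 (lt_min (lt_add_of_pos_right _ hε) ht)
  exact (infDist_le_dist_of_mem (hnear y hyt (hxy.trans_le (min_le_right _ _)))).trans_lt
    (hxy.trans_le (min_le_left _ _))

theorem IsGeodesicOn.mem_Icc_of_dist_lt {X : Type*} [MetricSpace X] {f : ℤ → X}
    {a b a' b' i j : ℤ} (hf : IsGeodesicOn f a' b') (hsub : Icc a b ⊆ Icc a' b')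
    (hi : i ∈ Icc a b) (hj : j ∈ Icc a' b') (ha : dist (f i) (f j) < dist (f i) (f a))
    (hb : dist (f i) (f j) < dist (f i) (f b)) : j ∈ Icc a b := by
  have hab : a ≤ b := hi.1.trans hi.2
  rw [hf i (hsub hi) j hj, hf i (hsub hi) a (hsub ⟨le_rfl, hab⟩)] at ha
  rw [hf i (hsub hi) j hj, hf i (hsub hi) b (hsub ⟨hab, le_rfl⟩)] at hb
  have hai : (a : ℝ) ≤ i := by exact_mod_cast hi.1
  have hib : (i : ℝ) ≤ b := by exact_mod_cast hi.2
  rw [abs_of_nonneg (sub_nonneg.2 hai)] at ha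
  rw [abs_of_nonpos (sub_nonpos.2 hib)] at hb
  have haj : (a : ℝ) ≤ j := by linarith [le_abs_self ((i : ℝ) - j)]
  have hjb : (j : ℝ) ≤ b := by linarith [neg_abs_le ((i : ℝ) - j)]
  exact ⟨by exact_mod_cast haj, by exact_mod_cast hjb⟩

theorem complement_nbhd_agrees_general {X : Type*} [MetricSpace X]
    (f : ℤ → X) (a b a' b' : ℤ) (hsub : Icc a b ⊆ Icc a' b')
    (hgeo : IsGeodesicOn f a' b')
    (i : ℤ) (hi : i ∈ Icc a b)
    (R K : ℝ) (hKR : K < R)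
    (hend₁ : 5 * R ≤ dist (f i) (f a)) (hend₂ : 5 * R ≤ dist (f i) (f b)) :
    closedBall (f i) R \ {x | infDist x (f '' Icc a b) ≤ K} =
      closedBall (f i) R \ {x | infDist x (f '' Icc a' b') ≤ K} := by
  ext x
  simp only [mem_sdiff, mem_closedBall, mem_ofPred_eq, and_congr_right_iff, not_iff_not]
  intro hx
  have hρ : (f '' Icc a b).Nonempty := ⟨f i, mem_image_of_mem f hi⟩
  refine ⟨fun h => (infDist_le_infDist_of_subset (image_mono hsub) hρ).trans h,
    fun h => (infDist_le_of_forall_dist_lt_mem (hρ.mono (image_mono hsub)) ?_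
      (h.trans_lt hKR)).trans h⟩
  rintro _ ⟨j, hj, rfl⟩ hxj
  have hij : dist (f i) (f j) < 2 * R := by
    linarith [dist_triangle (f i) x (f j), dist_comm x (f i)]
  have hR : 0 ≤ R := dist_nonneg.trans hx
  exact mem_image_of_mem f (hgeo.mem_Icc_of_dist_lt hsub hi hj (by linarith) (by linarith))

/-- If `ρ ⊂ ρ'` are geodesics and `x₀ ∈ ρ` lies at distance at least `5R` from the
endpoints of `ρ`, then `N_R(x₀) \ N_K(ρ) = N_R(x₀) \ N_K(ρ')` for `0 ≤ K < R`. -/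
theorem complement_nbhd_agrees {X : Type*} [MetricSpace X]
    (f : ℤ → X) (a b a' b' : ℤ) (hsub : Icc a b ⊆ Icc a' b')
    (hgeo : IsGeodesicOn f a' b')
    (i : ℤ) (hi : i ∈ Icc a b)
    (R K : ℝ) (hK : 0 ≤ K) (hKR : K < R)
    (hend₁ : 5 * R ≤ dist (f i) (f a)) (hend₂ : 5 * R ≤ dist (f i) (f b)) :
    closedBall (f i) R \ {x | infDist x (f '' Icc a b) ≤ K} =
      closedBall (f i) R \ {x | infDist x (f '' Icc a' b') ≤ K} :=
  complement_nbhd_agrees_general f a b a' b' hsub hgeo i hi R K hKR hend₁ hend₂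
end

section
/- Every infinite, locally finite, connected, vertex-transitive graph contains a bi-infinite geodesic, i.e. an isometric embedding of ℤ (with the standard metric) into the vertex set with the path metric. -/
/-!
Fix a vertex `v₀`. Since the graph is infinite and balls are finite, there are geodesic segments
of every length `2N`; by vertex-transitivity each can be moved so that its midpoint is `v₀`,
giving maps `f N : ℤ → V` that are isometric on `[-N, N]`, 1-Lipschitz, and send `0` to `v₀`.
Then `f N k` ranges over the finite ball of radius `|k|` about `v₀`, so by compactness of a
product of finite discrete sets the `f N` have a cluster point `γ`. Any two values of `γ` agree
with those of `f N` for some large `N`, so `γ` is a bi-infinite geodesic.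
-/

open Filter SimpleGraph

theorem exists_frequently_eqOn_of_finite_range {α ι V : Type*} (l : Filter α) [l.NeBot]
    (f : α → ι → V) (hf : ∀ i, (Set.range fun a ↦ f a i).Finite) :
    ∃ γ : ι → V, ∀ s : Finset ι, ∃ᶠ a in l, Set.EqOn (f a) γ s := by
  let _ : TopologicalSpace V := ⊥
  have : DiscreteTopology V := ⟨rfl⟩
  have hK : IsCompact (Set.univ.pi fun i ↦ Set.range fun a ↦ f a i) :=
    isCompact_univ_pi fun i ↦ (hf i).isCompact
  obtain ⟨γ, -, hγ⟩ := hK.exists_mapClusterPt (f := l) (u := f)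
    (tendsto_principal.2 (.of_forall fun a i _ ↦ ⟨a, rfl⟩))
  exact ⟨γ, fun s ↦ hγ.frequently (p := fun g ↦ Set.EqOn g γ s)
    (set_pi_mem_nhds (s := fun i ↦ {γ i}) s.finite_toSet fun i _ ↦ mem_nhds_discrete.2 rfl)⟩

namespace SimpleGraph

variable {V V' : Type*} {G : SimpleGraph V} {G' : SimpleGraph V'}

theorem edist_map_le (f : G →g G') (u v : V) : G'.edist (f u) (f v) ≤ G.edist u v :=
  le_iInf fun p ↦ (edist_le (p.map f)).trans_eq (by simp)

theorem Iso.edist_map (φ : G ≃g G') (u v : V) : G'.edist (φ u) (φ v) = G.edist u v :=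
  le_antisymm (edist_map_le φ.toHom u v) <| by
    simpa using edist_map_le φ.symm.toHom (φ u) (φ v)

theorem Iso.dist_map (φ : G ≃g G') (u v : V) : G'.dist (φ u) (φ v) = G.dist u v :=
  congrArg ENat.toNat (φ.edist_map u v)

namespace Walk

variable {u v : V}

theorem dist_getVert_getVert_add_le (p : G.Walk u v) (i k : ℕ) :
    G.dist (p.getVert i) (p.getVert (i + k)) ≤ k := by
  have h := dist_le ((p.drop i).take k)
  rw [take_length, drop_getVert] at h
  exact h.trans (min_le_left _ _)

theorem dist_getVert_getVert_le (p : G.Walk u v) (i j : ℕ) :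
    G.dist (p.getVert i) (p.getVert j) ≤ ((i : ℤ) - j).natAbs := by
  rcases le_total i j with hij | hij
  · obtain ⟨k, rfl⟩ := Nat.exists_eq_add_of_le hij
    have := p.dist_getVert_getVert_add_le i k
    omega
  · obtain ⟨k, rfl⟩ := Nat.exists_eq_add_of_le hij
    have := p.dist_getVert_getVert_add_le j k
    rw [dist_comm]
    omega

theorem dist_getVert_getVert_of_length_eq_dist (p : G.Walk u v) (hp : p.length = G.dist u v)
    {i j : ℕ} (hi : i ≤ p.length) (hj : j ≤ p.length) :
    G.dist (p.getVert i) (p.getVert j) = ((i : ℤ) - j).natAbs := by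
  wlog hij : i ≤ j generalizing i j
  · rw [dist_comm, this hj hi (by omega)]
    omega
  refine le_antisymm (p.dist_getVert_getVert_le i j) ?_
  have h_start := p.dist_getVert_getVert_le 0 i
  have h_end := p.dist_getVert_getVert_le j p.length
  rw [getVert_zero] at h_start
  rw [getVert_length] at h_end
  have h_uj := (p.take i).reachable.dist_triangle_left (p.getVert j)
  have h_uv := (p.drop j).reachable.dist_triangle_right u
  omega

end Walk

theorem Connected.finite_setOf_dist_le (hconn : G.Connected)
    (hlf : ∀ v, (G.neighborSet v).Finite) (v : V) (n : ℕ) : {u | G.dist v u ≤ n}.Finite := by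
  induction n generalizing v with
  | zero => simp [hconn.dist_eq_zero_iff]
  | succ n ih =>
    refine ((hlf v).biUnion fun w _ ↦ ih w).insert v |>.subset fun u hu ↦ ?_
    obtain rfl | hne := eq_or_ne v u
    · exact Set.mem_insert _ _
    obtain ⟨p, hp⟩ := hconn.exists_walk_length_eq_dist v u
    have hp_ne : ¬p.Nil := Walk.not_nil_of_ne hne
    refine Set.mem_insert_of_mem _ (Set.mem_biUnion (p.adj_snd hp_ne) ?_)
    have h_tail := dist_le p.tail
    have := p.length_tail_add_one hp_ne
    rw [Set.mem_ofPred_eq] at hu ⊢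
    omega

theorem Connected.exists_lt_dist [Infinite V] (hconn : G.Connected)
    (hlf : ∀ v, (G.neighborSet v).Finite) (v : V) (n : ℕ) : ∃ u, n < G.dist v u := by
  simpa using (hconn.finite_setOf_dist_le hlf v n).exists_notMem

theorem Connected.exists_centered_geodesic_segment [Infinite V] (hconn : G.Connected)
    (hlf : ∀ v, (G.neighborSet v).Finite) (htrans : ∀ u v : V, ∃ φ : G ≃g G, φ u = v)
    (v₀ : V) (N : ℕ) :
    ∃ f : ℤ → V, f 0 = v₀ ∧ (∀ a b, G.dist (f a) (f b) ≤ (a - b).natAbs) ∧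
      ∀ a b, a.natAbs ≤ N → b.natAbs ≤ N → G.dist (f a) (f b) = (a - b).natAbs := by
  obtain ⟨u, hu⟩ := hconn.exists_lt_dist hlf v₀ (2 * N)
  obtain ⟨p, hp⟩ := hconn.exists_walk_length_eq_dist v₀ u
  obtain ⟨φ, hφ⟩ := htrans (p.getVert N) v₀
  -- `Int.toNat` and `Walk.getVert` both clamp, so this is `p` recentred, extended by constants.
  refine ⟨fun k ↦ φ (p.getVert (k + N).toNat), by simpa using hφ, fun a b ↦ ?_, fun a b ha hb ↦ ?_⟩
  · have := p.dist_getVert_getVert_le (a + N).toNat (b + N).toNat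
    rw [φ.dist_map]
    omega
  · rw [φ.dist_map, p.dist_getVert_getVert_of_length_eq_dist hp (by omega) (by omega)]
    omega

end SimpleGraph

/-- Every infinite, locally finite, connected, vertex-transitive graph contains a
bi-infinite geodesic. -/
theorem exists_biinfinite_geodesic {V : Type*} (G : SimpleGraph V)
    (hinf : Infinite V) (hlf : ∀ v : V, (G.neighborSet v).Finite)
    (hconn : G.Connected)
    (htrans : ∀ u v : V, ∃ φ : G ≃g G, φ u = v) :
    ∃ γ : ℤ → V, ∀ m n : ℤ, (G.dist (γ m) (γ n) : ℤ) = |m - n| := by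
  obtain ⟨v₀⟩ := hconn.nonempty
  choose f hf_zero hf_lip hf_geod using hconn.exists_centered_geodesic_segment hlf htrans v₀
  obtain ⟨γ, hγ⟩ := exists_frequently_eqOn_of_finite_range atTop f fun k ↦
    (hconn.finite_setOf_dist_le hlf v₀ k.natAbs).subset <| by
      rintro _ ⟨N, rfl⟩
      simpa [hf_zero] using hf_lip N 0 k
  refine ⟨γ, fun m n ↦ ?_⟩
  obtain ⟨N, hγN, hN⟩ :=
    ((hγ {m, n}).and_eventually (eventually_ge_atTop (max m.natAbs n.natAbs))).exists
  rw [← hγN (by simp : m ∈ _), ← hγN (by simp : n ∈ _), hf_geod N m n (by omega) (by omega),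
    Int.natCast_natAbs]
end

section
/- Existence of infinite normal rays: let X be a connected, locally finite graph and Y ⊂ X a subgraph such that the setwise stabiliser of Y in Aut(X) acts coboundedly on Y, and such that the Hausdorff distance between Y and X is infinite. Then there exists a one-way infinite geodesic ray ρ : [0,∞) → X with ρ(0) ∈ Y and dist_X(ρ(t), Y) = t for all t ≥ 0. -/
open SimpleGraph

private lemma dist_getVert_le' {V : Type*} {G : SimpleGraph V} (hconn : G.Connected)
    {u v : V} (p : G.Walk u v) (i : ℕ) : G.dist u (p.getVert i) ≤ i := by
  induction p generalizing i with
  | nil => simp [Walk.getVert, SimpleGraph.dist_self]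
  | @cons a b c h q ih =>
    cases i with
    | zero => simp
    | succ i =>
      rw [Walk.getVert_cons_succ]
      calc G.dist a (q.getVert i) ≤ G.dist a b + G.dist b (q.getVert i) :=
            hconn.dist_triangle
        _ ≤ 1 + i := by
            have h1 : G.dist a b ≤ 1 := by
              simpa using G.dist_le (Walk.cons h Walk.nil)
            exact Nat.add_le_add h1 (ih i)
        _ = i + 1 := by omega

private lemma dist_getVert_right' {V : Type*} {G : SimpleGraph V} (hconn : G.Connected)
    {u v : V} (p : G.Walk u v) (i : ℕ) (hi : i ≤ p.length) :
    G.dist (p.getVert i) v ≤ p.length - i := by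
  have h := dist_getVert_le' hconn p.reverse (p.length - i)
  rw [Walk.getVert_reverse] at h
  have h2 : p.length - (p.length - i) = i := by omega
  rw [h2] at h
  rwa [SimpleGraph.dist_comm]

private lemma dist_getVert_getVert_le' {V : Type*} {G : SimpleGraph V} (hconn : G.Connected)
    {u v : V} (p : G.Walk u v) (s t : ℕ) (hst : s ≤ t) :
    G.dist (p.getVert s) (p.getVert t) ≤ t - s := by
  obtain ⟨k, rfl⟩ := Nat.exists_eq_add_of_le hst
  induction k with
  | zero => simp
  | succ k ih =>
    have step : G.dist (p.getVert (s + k)) (p.getVert (s + k + 1)) ≤ 1 := by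
      by_cases hk : s + k < p.length
      · have hadj := p.adj_getVert_succ hk
        have hl : (Walk.cons hadj Walk.nil).length = 1 := by
          rw [Walk.length_cons, Walk.length_nil]
        exact le_trans (G.dist_le (Walk.cons hadj Walk.nil)) (le_of_eq hl)
      · rw [p.getVert_of_length_le (by omega), p.getVert_of_length_le (by omega),
          SimpleGraph.dist_self]
        exact Nat.zero_le 1
    calc G.dist (p.getVert s) (p.getVert (s + (k + 1)))
        ≤ G.dist (p.getVert s) (p.getVert (s + k)) +
            G.dist (p.getVert (s + k)) (p.getVert (s + k + 1)) := by
          have : s + (k + 1) = s + k + 1 := by omega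
          rw [this]; exact hconn.dist_triangle
      _ ≤ (s + k - s) + 1 := Nat.add_le_add (ih (by omega)) step
      _ ≤ s + (k + 1) - s := by omega

private lemma ball_finite' {V : Type*} {G : SimpleGraph V} (hconn : G.Connected)
    (hlf : ∀ v : V, (G.neighborSet v).Finite) (v : V) :
    ∀ R : ℕ, {x | G.dist v x ≤ R}.Finite := by
  intro R
  induction R with
  | zero =>
    apply Set.Finite.subset (Set.finite_singleton v)
    intro x hx
    simp only [Set.mem_setOf_eq, Nat.le_zero] at hx
    simp [(hconn.dist_eq_zero_iff.mp hx).symm]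
  | succ R ih =>
    apply Set.Finite.subset (ih.union (Set.Finite.biUnion ih (fun w _ => hlf w)))
    intro x hx
    simp only [Set.mem_setOf_eq] at hx
    by_cases h : G.dist v x ≤ R
    · exact Or.inl h
    · have hd : G.dist v x = R + 1 := by omega
      obtain ⟨p, hp⟩ := hconn.exists_walk_length_eq_dist v x
      rw [hd] at hp
      have hadj : G.Adj (p.getVert R) (p.getVert (R + 1)) :=
        p.adj_getVert_succ (by omega)
      have hx' : p.getVert (R + 1) = x := by
        rw [← hp]; exact p.getVert_length
      have hxmem : x ∈ G.neighborSet (p.getVert R) := by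
        rw [hx'] at hadj
        exact hadj
      exact Or.inr (Set.mem_biUnion
        (show p.getVert R ∈ {x | G.dist v x ≤ R} from dist_getVert_le' hconn p R) hxmem)

private lemma iso_dist' {V : Type*} {G : SimpleGraph V} (hconn : G.Connected)
    (φ : G ≃g G) (u v : V) : G.dist (φ u) (φ v) = G.dist u v := by
  have key : ∀ (ψ : G ≃g G) (a b : V), G.dist (ψ a) (ψ b) ≤ G.dist a b := by
    intro ψ a b
    obtain ⟨p, hp⟩ := hconn.exists_walk_length_eq_dist a b
    calc G.dist (ψ a) (ψ b) ≤ (p.map ψ.toHom).length := G.dist_le _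
      _ = p.length := by simp
      _ = G.dist a b := hp
  refine le_antisymm (key φ u v) ?_
  have h := key φ.symm (φ u) (φ v)
  simpa using h

/-- Existence of infinite normal geodesic rays: if the setwise stabiliser of `S` in
`Aut(G)` acts coboundedly on `S` and there are points of `G` arbitrarily far from `S`,
then there is a geodesic ray `ρ` based in `S` with `dist(ρ t, S) = t` for all `t`. -/
theorem exists_normal_ray {V : Type*} (G : SimpleGraph V)
    (hconn : G.Connected) (hlf : ∀ v : V, (G.neighborSet v).Finite)
    (S : Set V) (hS : S.Nonempty)
    (B : ℕ) (y₀ : V) (hy₀ : y₀ ∈ S)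
    (hcobound : ∀ y ∈ S, ∃ φ : G ≃g G, (φ : V → V) '' S = S ∧ G.dist y (φ y₀) ≤ B)
    (hfar : ∀ R : ℕ, ∃ x : V, ∀ y ∈ S, R < G.dist x y) :
    ∃ ρ : ℕ → V, ρ 0 ∈ S ∧
      (∀ s t : ℕ, (G.dist (ρ s) (ρ t) : ℤ) = |(s : ℤ) - t|) ∧
      ∀ t : ℕ, (∀ y ∈ S, t ≤ G.dist (ρ t) y) ∧ (∃ y ∈ S, G.dist (ρ t) y = t) := by
  -- Step 1: normal segments of every length, based near y₀.
  have key : ∀ n : ℕ, ∃ σ : ℕ → V,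
      (σ 0 ∈ S ∧ G.dist y₀ (σ 0) ≤ B) ∧
      (∀ s t : ℕ, s ≤ t → t ≤ n → G.dist (σ s) (σ t) = t - s) ∧
      (∀ t ≤ n, (∀ y ∈ S, t ≤ G.dist (σ t) y) ∧ ∃ y ∈ S, G.dist (σ t) y = t) := by
    intro n
    obtain ⟨x, hx⟩ := hfar n
    -- nearest point of S to x
    set D : Set ℕ := {d : ℕ | ∃ y ∈ S, G.dist x y = d} with hD
    have hDne : D.Nonempty := ⟨G.dist x hS.choose, hS.choose, hS.choose_spec, rfl⟩
    set N : ℕ := sInf D with hNdef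
    obtain ⟨ystar, hystarS, hystar⟩ : ∃ y ∈ S, G.dist x y = N := Nat.sInf_mem hDne
    have hNle : ∀ y ∈ S, N ≤ G.dist x y := fun y hy => Nat.sInf_le ⟨y, hy, rfl⟩
    have hnN : n < N := hystar ▸ hx ystar hystarS
    obtain ⟨p, hp⟩ := hconn.exists_walk_length_eq_dist ystar x
    have hpN : p.length = N := by rw [hp, SimpleGraph.dist_comm, hystar]
    set σ : ℕ → V := fun t => p.getVert t with hσ
    have f1 : ∀ t : ℕ, G.dist ystar (σ t) ≤ t := fun t => dist_getVert_le' hconn p t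
    have f2 : ∀ t : ℕ, t ≤ N → G.dist (σ t) x ≤ N - t := by
      intro t ht
      have := dist_getVert_right' hconn p t (by omega)
      rwa [hpN] at this
    have hgeo : ∀ s t : ℕ, s ≤ t → t ≤ n → G.dist (σ s) (σ t) = t - s := by
      intro s t hst htn
      have hub : G.dist (σ s) (σ t) ≤ t - s := dist_getVert_getVert_le' hconn p s t hst
      have hlb : N ≤ s + G.dist (σ s) (σ t) + (N - t) := by
        calc N = G.dist ystar x := by rw [SimpleGraph.dist_comm, hystar]
          _ ≤ G.dist ystar (σ s) + G.dist (σ s) x := hconn.dist_triangle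
          _ ≤ G.dist ystar (σ s) + (G.dist (σ s) (σ t) + G.dist (σ t) x) :=
              Nat.add_le_add_left hconn.dist_triangle _
          _ ≤ s + (G.dist (σ s) (σ t) + (N - t)) :=
              Nat.add_le_add (f1 s) (Nat.add_le_add_left (f2 t (by omega)) _)
          _ = s + G.dist (σ s) (σ t) + (N - t) := by omega
      omega
    have hnorm : ∀ t ≤ n, (∀ y ∈ S, t ≤ G.dist (σ t) y) ∧ ∃ y ∈ S, G.dist (σ t) y = t := by
      intro t htn
      have htN : t ≤ N := by omega
      have hlow : ∀ y ∈ S, t ≤ G.dist (σ t) y := by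
        intro y hy
        have h1 : N ≤ G.dist x y := hNle y hy
        have h2 : G.dist x y ≤ G.dist x (σ t) + G.dist (σ t) y := hconn.dist_triangle
        have h3 : G.dist x (σ t) ≤ N - t := by
          rw [SimpleGraph.dist_comm]; exact f2 t htN
        omega
      refine ⟨hlow, ystar, hystarS, le_antisymm ?_ (hlow ystar hystarS)⟩
      rw [SimpleGraph.dist_comm]; exact f1 t
    -- translate by an automorphism
    obtain ⟨φ, hφS, hφB⟩ := hcobound ystar hystarS
    have hmem1 : ∀ w ∈ S, φ w ∈ S := by
      intro w hw; rw [← hφS]; exact Set.mem_image_of_mem _ hw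
    have hmem2 : ∀ z ∈ S, φ.symm z ∈ S := by
      intro z hz
      rw [← hφS] at hz
      obtain ⟨w, hw, rfl⟩ := hz
      simpa using hw
    refine ⟨fun t => φ.symm (σ t), ⟨?_, ?_⟩, ?_, ?_⟩
    · show φ.symm (σ 0) ∈ S
      have h3 : σ 0 = ystar := p.getVert_zero
      rw [h3]; exact hmem2 ystar hystarS
    · show G.dist y₀ (φ.symm (σ 0)) ≤ B
      have h3 : σ 0 = ystar := p.getVert_zero
      rw [h3]
      have h1 : G.dist (φ y₀) (φ (φ.symm ystar)) = G.dist y₀ (φ.symm ystar) :=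
        iso_dist' hconn φ y₀ (φ.symm ystar)
      have h2 : φ (φ.symm ystar) = ystar := by simp
      rw [h2] at h1
      rw [← h1, SimpleGraph.dist_comm]
      exact hφB
    · intro s t hst htn
      show G.dist (φ.symm (σ s)) (φ.symm (σ t)) = t - s
      have hh := iso_dist' hconn φ.symm (σ s) (σ t)
      rw [hh]; exact hgeo s t hst htn
    · intro t htn
      obtain ⟨hlow, y, hy, hyt⟩ := hnorm t htn
      constructor
      · intro z hz
        show t ≤ G.dist (φ.symm (σ t)) z
        have h1 : G.dist (φ (φ.symm (σ t))) (φ z) = G.dist (φ.symm (σ t)) z :=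
          iso_dist' hconn φ _ _
        have h2 : φ (φ.symm (σ t)) = σ t := by simp
        rw [h2] at h1
        rw [← h1]
        exact hlow (φ z) (hmem1 z hz)
      · refine ⟨φ.symm y, hmem2 y hy, ?_⟩
        show G.dist (φ.symm (σ t)) (φ.symm y) = t
        have hh := iso_dist' hconn φ.symm (σ t) y
        rw [hh]; exact hyt
  choose σ hbase hgeo hnorm using key
  -- Step 2: compactness via an ultrafilter extending atTop.
  obtain ⟨U, hU⟩ : ∃ U : Ultrafilter ℕ, (U : Filter ℕ) ≤ Filter.atTop :=
    ⟨Ultrafilter.of Filter.atTop, Ultrafilter.of_le _⟩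
  have hge : ∀ t : ℕ, {n : ℕ | t ≤ n} ∈ U := fun t => hU (Filter.mem_atTop t)
  have hball : ∀ t : ℕ, {x | G.dist y₀ x ≤ B + t}.Finite :=
    fun t => ball_finite' hconn hlf y₀ (B + t)
  have hin : ∀ t n : ℕ, t ≤ n → G.dist y₀ (σ n t) ≤ B + t := by
    intro t n htn
    calc G.dist y₀ (σ n t) ≤ G.dist y₀ (σ n 0) + G.dist (σ n 0) (σ n t) :=
          hconn.dist_triangle
      _ ≤ B + (t - 0) := Nat.add_le_add (hbase n).2 (le_of_eq (hgeo n 0 t (by omega) htn))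
      _ = B + t := by omega
  have hlim : ∀ t : ℕ, ∃ v : V, {n : ℕ | σ n t = v} ∈ U := by
    intro t
    have hsub : {n : ℕ | t ≤ n} ⊆ ⋃ v ∈ {x | G.dist y₀ x ≤ B + t}, {n : ℕ | σ n t = v} := by
      intro n hn
      exact Set.mem_biUnion (hin t n hn) rfl
    have hmem : (⋃ v ∈ {x | G.dist y₀ x ≤ B + t}, {n : ℕ | σ n t = v}) ∈ U :=
      Filter.mem_of_superset (hge t) hsub
    obtain ⟨v, _, hv⟩ := (Ultrafilter.finite_biUnion_mem_iff (hball t)).mp hmem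
    exact ⟨v, hv⟩
  choose ρ hρ using hlim
  refine ⟨ρ, ?_, ?_, ?_⟩
  · obtain ⟨n, hn⟩ := Ultrafilter.nonempty_of_mem (hρ 0)
    rw [← hn]
    exact (hbase n).1
  · intro s t
    have hM : ({n : ℕ | σ n s = ρ s} ∩ {n : ℕ | σ n t = ρ t} ∩ {n : ℕ | max s t ≤ n}) ∈ U :=
      Filter.inter_mem (Filter.inter_mem (hρ s) (hρ t)) (hge (max s t))
    obtain ⟨n, ⟨hns, hnt⟩, hn⟩ := Ultrafilter.nonempty_of_mem hM
    simp only [Set.mem_setOf_eq] at hns hnt hn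
    rcases le_total s t with hst | hst
    · have hd : G.dist (ρ s) (ρ t) = t - s := by
        rw [← hns, ← hnt]; exact hgeo n s t hst (le_trans (le_max_right s t) hn)
      rw [hd, Nat.cast_sub hst, abs_sub_comm,
        abs_of_nonneg (sub_nonneg.mpr (by exact_mod_cast hst))]
    · have hd : G.dist (ρ s) (ρ t) = s - t := by
        rw [SimpleGraph.dist_comm, ← hns, ← hnt]
        exact hgeo n t s hst (le_trans (le_max_left s t) hn)
      rw [hd, Nat.cast_sub hst,
        abs_of_nonneg (sub_nonneg.mpr (by exact_mod_cast hst))]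
  · intro t
    have hM : ({n : ℕ | σ n t = ρ t} ∩ {n : ℕ | t ≤ n}) ∈ U :=
      Filter.inter_mem (hρ t) (hge t)
    obtain ⟨n, hnt, hn⟩ := Ultrafilter.nonempty_of_mem hM
    simp only [Set.mem_setOf_eq] at hnt hn
    rw [← hnt]
    exact hnorm n t hn
end

section
/- The set of asymptotic minors of a length space is a quasi-isometry invariant: if X and Y are quasi-isometric length spaces and H is a finite connected graph, then H is an asymptotic minor of X if and only if H is an asymptotic minor of Y. -/
open Set Metric Filter

/-- `X` is a length space: any two points are joined by continuous paths of length
arbitrarily close to their distance. -/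
def IsLengthSpace (X : Type*) [MetricSpace X] : Prop :=
  ∀ x y : X, ∀ ε : ℝ, 0 < ε → ∃ f : ℝ → X, ContinuousOn f (Icc 0 1) ∧
    f 0 = x ∧ f 1 = y ∧ eVariationOn f (Icc 0 1) ≤ ENNReal.ofReal (dist x y + ε)

/-- `U, P` form a `K`-fat `H`-minor in the metric space `X`: the branch sets `U v` are
path-connected, each edge `uv` of `H` has an edge path `P u v` joining `U u` to `U v`,
and any two pieces not required to meet are at distance `> K`. -/
def IsFatMinor {V : Type*} (H : SimpleGraph V) {X : Type*} [MetricSpace X] (K : ℝ)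
    (U : V → Set X) (P : V → V → Set X) : Prop :=
  (∀ v, IsPathConnected (U v)) ∧
  (∀ u v, P u v = P v u) ∧
  (∀ u v, H.Adj u v → ∃ f : ℝ → X, ContinuousOn f (Icc 0 1) ∧
      f '' Icc 0 1 = P u v ∧ f 0 ∈ U u ∧ f 1 ∈ U v) ∧
  (∀ u v, u ≠ v → ∀ a ∈ U u, ∀ c ∈ U v, K < dist a c) ∧
  (∀ u v w, H.Adj u v → w ≠ u → w ≠ v → ∀ a ∈ P u v, ∀ c ∈ U w, K < dist a c) ∧
  (∀ u v u' v', H.Adj u v → H.Adj u' v' → s(u, v) ≠ s(u', v') →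
      ∀ a ∈ P u v, ∀ c ∈ P u' v', K < dist a c)

/-- `H` is an asymptotic minor of `X`: `X` contains `K`-fat `H`-minors for all `K ≥ 1`. -/
def IsAsymptoticMinor {V : Type*} (H : SimpleGraph V) (X : Type*) [MetricSpace X] : Prop :=
  ∀ K : ℝ, 1 ≤ K → ∃ (U : V → Set X) (P : V → V → Set X), IsFatMinor H K U P

/-- `φ` is a `lam`-quasi-isometry. -/
def IsQI {X Y : Type*} [MetricSpace X] [MetricSpace Y] (lam : ℝ) (φ : X → Y) : Prop :=
  (∀ x x' : X, (1 / lam) * dist x x' - lam ≤ dist (φ x) (φ x') ∧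
    dist (φ x) (φ x') ≤ lam * dist x x' + lam) ∧
  ∀ y : Y, ∃ x : X, dist y (φ x) ≤ lam

/-! A `λ`-quasi-isometry `φ : X → Y` sends a `K'`-fat minor of `X` to pieces of `Y` lying within
`2λ + 1` of the images of the original pieces; for `K'` large in terms of `K` and `λ` these stay
`K`-apart. They are made path-connected again because `Y` is a length space: a path in `X` is
sampled at points at distance `< 1`, whose images are at distance `≤ 2λ` and so are joined by short
paths in `Y`. A coarse inverse of `φ` is again a quasi-isometry, which gives the converse. -/

def coarseImage {X Y : Type*} [PseudoMetricSpace Y] (φ : X → Y) (r : ℝ) (S : Set X) : Set Y :=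
  ⋃ x ∈ S, closedBall (φ x) r

theorem Path.exists_chain {X : Type*} [PseudoMetricSpace X] {a b : X} (γ : Path a b) {ε : ℝ}
    (hε : 0 < ε) : ∃ (n : ℕ) (c : ℕ → X), c 0 = a ∧ c n = b ∧ (∀ i, c i ∈ range γ) ∧
      ∀ i < n, dist (c i) (c (i + 1)) < ε := by
  obtain ⟨δ, hδ, hγδ⟩ := Metric.uniformContinuous_iff.mp γ.uniformContinuous_extend ε hε
  obtain ⟨n, hn⟩ := exists_nat_one_div_lt hδ
  have hN : (0 : ℝ) < n + 1 := by positivity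
  refine ⟨n + 1, fun i => γ.extend (i / (n + 1)), by simp, by simp [hN.ne'],
    fun i => γ.extend_range ▸ mem_range_self _, fun i _ => hγδ ?_⟩
  have hstep : (i : ℝ) / (n + 1) - ((i + 1 : ℕ) : ℝ) / (n + 1) = -(1 / (n + 1)) := by
    push_cast
    field_simp
    ring
  rwa [Real.dist_eq, hstep, abs_neg, abs_of_pos (by positivity)]

theorem Path.exists_continuousOn_image_Icc_eq_range {X : Type*} [TopologicalSpace X] {y z : X}
    (γ : Path y z) : ∃ f : ℝ → X, ContinuousOn f (Icc 0 1) ∧ f '' Icc 0 1 = range γ ∧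
      f 0 = y ∧ f 1 = z :=
  ⟨γ.extend, γ.continuous_extend.continuousOn, γ.image_extend_of_subset le_rfl, by simp, by simp⟩

section LengthSpace

variable {Y : Type*} [MetricSpace Y]

theorem IsLengthSpace.joinedIn_closedBall (hY : IsLengthSpace Y) (a b : Y) :
    JoinedIn (closedBall a (dist a b + 1)) a b := by
  obtain ⟨f, hf, hf0, hf1, hvar⟩ := hY a b 1 one_pos
  refine JoinedIn.ofLine hf hf0 hf1 ?_
  rintro _ ⟨t, ht, rfl⟩
  have := (eVariationOn.edist_le f ht ⟨le_rfl, zero_le_one⟩).trans hvar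
  rwa [edist_dist, hf0, ENNReal.ofReal_le_ofReal_iff (by positivity)] at this

theorem IsLengthSpace.joinedIn_of_chain (hY : IsLengthSpace Y) (c : ℕ → Y) {D : ℝ} (hD : 0 ≤ D) :
    ∀ n, (∀ i < n, dist (c i) (c (i + 1)) ≤ D) →
      JoinedIn (⋃ i ≤ n, closedBall (c i) (D + 1)) (c 0) (c n)
  | 0, _ => JoinedIn.refl (mem_iUnion₂.2 ⟨0, le_rfl, mem_closedBall_self (by linarith)⟩)
  | n + 1, hc => by
    refine ((hY.joinedIn_of_chain c hD n fun i hi => hc i (by omega)).mono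
      (iUnion₂_mono' fun i hi => ⟨i, by omega, subset_rfl⟩)).trans
      ((hY.joinedIn_closedBall (c n) (c (n + 1))).mono ?_)
    exact (closedBall_subset_closedBall (by linarith [hc n (by omega)])).trans
      (subset_iUnion₂ (s := fun i (_ : i ≤ n + 1) => closedBall (c i) (D + 1)) n (by omega))

variable {X : Type*} [PseudoMetricSpace X] {φ : X → Y} {D : ℝ}

theorem IsLengthSpace.joinedIn_coarseImage (hY : IsLengthSpace Y)
    (hφ : ∀ x x', dist x x' < 1 → dist (φ x) (φ x') ≤ D) {S : Set X} {a b : X}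
    (h : JoinedIn S a b) : JoinedIn (coarseImage φ (D + 1) S) (φ a) (φ b) := by
  obtain ⟨γ, hγS⟩ := h
  obtain ⟨n, c, hc0, hcn, hcγ, hc⟩ := γ.exists_chain one_pos
  have hD : 0 ≤ D := dist_nonneg.trans (hφ a a (by simp))
  have hchain := hY.joinedIn_of_chain (φ ∘ c) hD n fun i hi => hφ _ _ (hc i hi)
  simp only [Function.comp_apply, hc0, hcn] at hchain
  refine hchain.mono (iUnion₂_subset fun i _ => ?_)
  obtain ⟨t, ht⟩ := hcγ i
  exact subset_iUnion₂ (s := fun x (_ : x ∈ S) => closedBall (φ x) (D + 1)) (c i) (ht ▸ hγS t)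

theorem IsLengthSpace.exists_isPathConnected_superset_image (hY : IsLengthSpace Y)
    (hφ : ∀ x x', dist x x' < 1 → dist (φ x) (φ x') ≤ D) {S : Set X} (hS : IsPathConnected S) :
    ∃ T, IsPathConnected T ∧ φ '' S ⊆ T ∧ T ⊆ coarseImage φ (D + 1) S := by
  obtain ⟨x₀, hx₀, hjoin⟩ := hS
  have himage : φ '' S ⊆ pathComponentIn (coarseImage φ (D + 1) S) (φ x₀) := by
    rintro _ ⟨x, hx, rfl⟩
    exact hY.joinedIn_coarseImage hφ (hjoin hx)
  exact ⟨_, isPathConnected_pathComponentIn (pathComponentIn_subset (himage ⟨x₀, hx₀, rfl⟩)),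
    himage, pathComponentIn_subset⟩

end LengthSpace

theorem lt_dist_of_mem_coarseImage {X Y : Type*} [PseudoMetricSpace X] [PseudoMetricSpace Y]
    {φ : X → Y} {lam K r : ℝ} (hlam : 0 < lam)
    (hφ : ∀ x x', 1 / lam * dist x x' - lam ≤ dist (φ x) (φ x')) {A B : Set X}
    (hAB : ∀ a ∈ A, ∀ b ∈ B, lam * (K + 2 * r + lam) < dist a b) :
    ∀ y ∈ coarseImage φ r A, ∀ y' ∈ coarseImage φ r B, K < dist y y' := by
  simp only [coarseImage, mem_iUnion₂, mem_closedBall]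
  rintro y ⟨x, hx, hyx⟩ y' ⟨x', hx', hyx'⟩
  have hfar : K + 2 * r + lam < 1 / lam * dist x x' := by
    rw [one_div_mul_eq_div, lt_div_iff₀ hlam, mul_comm]
    exact hAB x hx x' hx'
  linarith [hφ x x', dist_triangle4 (φ x) y y' (φ x'), dist_comm y (φ x)]

theorem exists_symmetric_choice {V α : Type*} [Nonempty α] {r : V → V → Prop}
    (hr : ∀ {u v}, r u v → r v u)
    {R : V → V → α → Prop} (hR : ∀ u v a, R u v a → R v u a) (h : ∀ u v, r u v → ∃ a, R u v a) :
    ∃ P : V → V → α, (∀ u v, P u v = P v u) ∧ ∀ u v, r u v → R u v (P u v) := by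
  let : LinearOrder V := IsWellOrder.linearOrder WellOrderingRel
  choose! Q hQ using h
  refine ⟨fun u v => Q (min u v) (max u v), fun u v => by dsimp only; rw [min_comm, max_comm],
    fun u v huv => ?_⟩
  rcases le_total u v with huv' | hvu
  · simpa only [min_eq_left huv', max_eq_right huv'] using hQ u v huv
  · simpa only [min_eq_right hvu, max_eq_left hvu] using hR _ _ _ (hQ v u (hr huv))

section FatMinor

variable {V : Type*} {H : SimpleGraph V} {X Y : Type*} [MetricSpace X] [MetricSpace Y]

theorem IsFatMinor.of_subset_coarseImage {φ : X → Y} {lam K r : ℝ} (hlam : 0 < lam)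
    (hφ : ∀ x x', 1 / lam * dist x x' - lam ≤ dist (φ x) (φ x')) {U : V → Set X}
    {P : V → V → Set X} (hUP : IsFatMinor H (lam * (K + 2 * r + lam)) U P) {U' : V → Set Y}
    {P' : V → V → Set Y} (hU'conn : ∀ v, IsPathConnected (U' v))
    (hP'symm : ∀ u v, P' u v = P' v u)
    (hP'path : ∀ u v, H.Adj u v → ∃ f : ℝ → Y, ContinuousOn f (Icc 0 1) ∧
      f '' Icc 0 1 = P' u v ∧ f 0 ∈ U' u ∧ f 1 ∈ U' v)
    (hU' : ∀ v, U' v ⊆ coarseImage φ r (U v))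
    (hP' : ∀ u v, H.Adj u v → P' u v ⊆ coarseImage φ r (P u v)) :
    IsFatMinor H K U' P' := by
  obtain ⟨-, -, -, hUU, hPU, hPP⟩ := hUP
  have hsep {A B : Set X} (hAB : ∀ a ∈ A, ∀ b ∈ B, lam * (K + 2 * r + lam) < dist a b) :=
    lt_dist_of_mem_coarseImage hlam hφ hAB
  refine ⟨hU'conn, hP'symm, hP'path, ?_, ?_, ?_⟩
  · exact fun u v huv a ha c hc => hsep (hUU u v huv) a (hU' u ha) c (hU' v hc)
  · exact fun u v w huv hwu hwv a ha c hc =>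
      hsep (hPU u v w huv hwu hwv) a (hP' u v huv ha) c (hU' w hc)
  · exact fun u v u' v' huv huv' hne a ha c hc =>
      hsep (hPP u v u' v' huv huv' hne) a (hP' u v huv ha) c (hP' u' v' huv' hc)

end FatMinor

section QuasiIsometry

variable {X Y : Type*} [MetricSpace X] [MetricSpace Y] {lam : ℝ} {φ : X → Y}

theorem IsQI.dist_le (hlam : 0 < lam) (hφ : IsQI lam φ) (x x' : X) :
    dist x x' ≤ lam * dist (φ x) (φ x') + lam ^ 2 := by
  have h := (hφ.1 x x').1
  rw [one_div_mul_eq_div, sub_le_iff_le_add, div_le_iff₀ hlam] at h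
  linarith

theorem IsQI.exists_isQI_inv (hlam : 1 ≤ lam) (hφ : IsQI lam φ) :
    ∃ ψ : Y → X, IsQI (3 * lam ^ 2) ψ := by
  have hlam₀ : 0 < lam := by linarith
  choose ψ hψ using hφ.2
  have hφψ : ∀ y y', dist (φ (ψ y)) (φ (ψ y')) ≤ dist y y' + 2 * lam ∧
      dist y y' ≤ dist (φ (ψ y)) (φ (ψ y')) + 2 * lam := fun y y' => by
    constructor <;>
    linarith [hψ y, hψ y', dist_triangle4 (φ (ψ y)) y y' (φ (ψ y')),
      dist_triangle4 y (φ (ψ y)) (φ (ψ y')) y', dist_comm y (φ (ψ y)), dist_comm y' (φ (ψ y'))]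
  have hlam_le : lam ≤ 3 * lam ^ 2 := by nlinarith
  refine ⟨ψ, fun y y' => ⟨?_, ?_⟩, fun x => ⟨φ x, ?_⟩⟩
  · have hupper := (hφ.1 (ψ y) (ψ y')).2
    rw [one_div_mul_eq_div, sub_le_iff_le_add, div_le_iff₀ (by positivity)]
    nlinarith [(hφψ y y').2,
      mul_le_mul_of_nonneg_right hlam_le (dist_nonneg (x := ψ y) (y := ψ y')),
      one_le_pow₀ (n := 3) hlam]
  · nlinarith [hφ.dist_le hlam₀ (ψ y) (ψ y'), mul_le_mul_of_nonneg_left (hφψ y y').1 hlam₀.le,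
      mul_le_mul_of_nonneg_right hlam_le (dist_nonneg (x := y) (y := y'))]
  · nlinarith [hφ.dist_le hlam₀ x (ψ (φ x)), hψ (φ x)]

end QuasiIsometry

theorem IsAsymptoticMinor.of_isQI {V : Type*} {H : SimpleGraph V} {X Y : Type*} [MetricSpace X]
    [MetricSpace Y] (hY : IsLengthSpace Y) {lam : ℝ} (hlam : 1 ≤ lam) {φ : X → Y}
    (hφ : IsQI lam φ) (h : IsAsymptoticMinor H X) : IsAsymptoticMinor H Y := by
  intro K hK
  have hlam₀ : 0 < lam := by linarith
  have hφ_coarse : ∀ x x', dist x x' < 1 → dist (φ x) (φ x') ≤ 2 * lam := fun x x' hxx' => by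
    nlinarith [(hφ.1 x x').2]
  obtain ⟨U, P, hUP⟩ := h (lam * (K + 2 * (2 * lam + 1) + lam)) (by nlinarith)
  choose U' hU'conn hU'image hU' using
    fun v => hY.exists_isPathConnected_superset_image hφ_coarse (hUP.1 v)
  let IsEdgeSet : V → V → Set Y → Prop := fun u v T =>
    T ⊆ coarseImage φ (2 * lam + 1) (P u v) ∧ ∃ y ∈ U' u, ∃ z ∈ U' v, ∃ γ : Path y z, range γ = T
  have hreverse : ∀ u v T, IsEdgeSet u v T → IsEdgeSet v u T :=
    fun u v T ⟨hT, y, hy, z, hz, γ, hγ⟩ =>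
      ⟨hUP.2.1 u v ▸ hT, z, hz, y, hy, γ.symm, by rw [Path.symm_range, hγ]⟩
  have hedge : ∀ u v, H.Adj u v → ∃ T, IsEdgeSet u v T := fun u v huv => by
    obtain ⟨f, hf, hfP, hf0, hf1⟩ := hUP.2.2.1 u v huv
    obtain ⟨γ, hγ⟩ := hY.joinedIn_coarseImage hφ_coarse (JoinedIn.ofLine hf rfl rfl hfP.subset)
    exact ⟨range γ, range_subset_iff.2 hγ, _, hU'image u (mem_image_of_mem φ hf0), _,
      hU'image v (mem_image_of_mem φ hf1), γ, rfl⟩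
  obtain ⟨P', hP'symm, hP'⟩ := exists_symmetric_choice (fun h => h.symm) hreverse hedge
  refine ⟨U', P', hUP.of_subset_coarseImage hlam₀ (fun x x' => (hφ.1 x x').1) hU'conn hP'symm
    (fun u v huv => ?_) hU' fun u v huv => (hP' u v huv).1⟩
  obtain ⟨-, y, hy, z, hz, γ, hγ⟩ := hP' u v huv
  obtain ⟨f, hf, hfγ, hf0, hf1⟩ := γ.exists_continuousOn_image_Icc_eq_range
  exact ⟨f, hf, hfγ.trans hγ, hf0 ▸ hy, hf1 ▸ hz⟩

theorem asymptoticMinor_qi_invariant_general {V : Type*} (H : SimpleGraph V)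
    {X Y : Type*} [MetricSpace X] [MetricSpace Y]
    (hX : IsLengthSpace X) (hY : IsLengthSpace Y)
    (lam : ℝ) (hlam : 1 ≤ lam) (φ : X → Y) (hφ : IsQI lam φ) :
    IsAsymptoticMinor H X ↔ IsAsymptoticMinor H Y := by
  obtain ⟨ψ, hψ⟩ := hφ.exists_isQI_inv hlam
  exact ⟨.of_isQI hY hlam hφ, .of_isQI hX (by nlinarith) hψ⟩

/-- Asymptotic minors are a quasi-isometry invariant of length spaces. -/
theorem asymptoticMinor_qi_invariant {V : Type*} [Fintype V] (H : SimpleGraph V)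
    (hHconn : H.Connected)
    {X Y : Type*} [MetricSpace X] [MetricSpace Y]
    (hX : IsLengthSpace X) (hY : IsLengthSpace Y)
    (lam : ℝ) (hlam : 1 ≤ lam) (φ : X → Y) (hφ : IsQI lam φ) :
    IsAsymptoticMinor H X ↔ IsAsymptoticMinor H Y :=
  asymptoticMinor_qi_invariant_general H hX hY lam hlam φ hφ
end

section
/- In a length space that is one-ended in the coarse sense, a K-fat complete-graph minor can be extended: if X is a length space such that for every bounded set B the complement X \ B has exactly one unbounded connected component, M ⊂ X is a 10(K+B)-fat K_m-minor contained in a subset Y on which a group acts B-coboundedly, and there is a geodesic ray ρ normal to Y, then X contains a K-fat K_{m+1}-minor. -/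
/-!
Translating `ρ` by the group gives, near a point `y v` of each branch set, a ray `σ v` normal to
`Y` that starts within `2B` of `y v`; as `σ v t` is at distance `t` from `Y`, the rays escape
every bounded neighbourhood of the minor. Once the branch sets are pruned to compact pieces the
minor is bounded, so by one-endedness the complement of its closed `(2B + 3K)`-neighbourhood has
a unique unbounded component `W`. It is path-connected because length spaces are locally
path-connected, and it contains the tail of every ray. Each branch set is enlarged by a short
path to its ray followed by the segment `σ v [0, 2K]`, and the segments `σ v [2K, 2B + 4K]`
become the edges to the new branch set `W`. All new pieces lie in balls of radius `2B + 4K`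
about the points `y v`, which the `10(K + B)` separation of the old minor keeps `K` apart.
-/

open Set Metric Filter

open Bornology

def IsOneEnded (X : Type*) [MetricSpace X] : Prop :=
  ∀ C : Set X, IsBounded C →
    ∃! W : Set X, (∃ x ∈ Cᶜ, W = connectedComponentIn Cᶜ x) ∧ ¬ IsBounded W

section

variable {X : Type*} [MetricSpace X]

def FarApart (K : ℝ) (A B : Set X) : Prop :=
  ∀ a ∈ A, ∀ c ∈ B, K < dist a c

def IsEdgePath (S A B : Set X) : Prop :=
  ∃ f : ℝ → X, ContinuousOn f (Icc 0 1) ∧ f '' Icc 0 1 = S ∧ f 0 ∈ A ∧ f 1 ∈ B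

structure IsNormalRay (Y : Set X) (σ : ℝ → X) : Prop where
  dist_eq : ∀ s t : ℝ, 0 ≤ s → 0 ≤ t → dist (σ s) (σ t) = |s - t|
  infDist_eq : ∀ t : ℝ, 0 ≤ t → infDist (σ t) Y = t

/-- The new vertex `Fin.last m` is joined to `v` through `Q v`. -/
def snocEdges {m : ℕ} (P : Fin m → Fin m → Set X) (Q : Fin m → Set X) :
    Fin (m + 1) → Fin (m + 1) → Set X :=
  Fin.lastCases (Fin.lastCases ∅ Q) fun u => Fin.lastCases (Q u) (P u)

namespace FarApart

variable {K K' D r : ℝ} {A A' B B' : Set X} {x : X}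

theorem symm (h : FarApart K A B) : FarApart K B A := fun c hc a ha => by
  rw [dist_comm]
  exact h a ha c hc

theorem mono (h : FarApart K A B) (hK : K' ≤ K) (hA : A' ⊆ A) (hB : B' ⊆ B) :
    FarApart K' A' B' :=
  fun a ha c hc => hK.trans_lt (h a (hA ha) c (hB hc))

theorem union_left (h : FarApart K A B) (h' : FarApart K A' B) : FarApart K (A ∪ A') B := by
  rintro a (ha | ha) c hc
  exacts [h a ha c hc, h' a ha c hc]

theorem closedBall_left (h : FarApart D A B) (hx : x ∈ A) : FarApart (D - r) (closedBall x r) B :=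
  fun a ha c hc => by
    have := h x hx c hc
    have := dist_triangle x a c
    rw [mem_closedBall, dist_comm] at ha
    linarith

theorem union_closedBall_left (h : FarApart D A B) (hx : x ∈ A) (hr : 0 ≤ r) :
    FarApart (D - r) (A ∪ closedBall x r) B :=
  (h.mono (by linarith) subset_rfl subset_rfl).union_left (h.closedBall_left hx)

end FarApart

theorem farApart_closedBall_closedBall {D r s : ℝ} {x y : X} (h : D < dist x y) :
    FarApart (D - r - s) (closedBall x r) (closedBall y s) := by
  have hxy : FarApart D {x} {y} := by
    simpa [FarApart] using h
  exact ((hxy.closedBall_left rfl).symm.closedBall_left rfl).symm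

namespace IsEdgePath

variable {S A B A' B' : Set X}

theorem symm (h : IsEdgePath S A B) : IsEdgePath S B A := by
  obtain ⟨f, hf, hfS, hf0, hf1⟩ := h
  refine ⟨fun t => f (1 - t), hf.comp (continuous_const.sub continuous_id).continuousOn ?_, ?_,
    by simpa using hf1, by simpa using hf0⟩
  · intro t ht
    exact ⟨by linarith [ht.2], by linarith [ht.1]⟩
  · rw [← hfS, ← image_image f (fun t : ℝ => 1 - t), image_const_sub_Icc]
    norm_num

theorem mono (h : IsEdgePath S A B) (hA : A ⊆ A') (hB : B ⊆ B') : IsEdgePath S A' B' := by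
  obtain ⟨f, hf, hfS, hf0, hf1⟩ := h
  exact ⟨f, hf, hfS, hA hf0, hB hf1⟩

theorem isCompact (h : IsEdgePath S A B) : IsCompact S := by
  obtain ⟨f, hf, rfl, -, -⟩ := h
  exact isCompact_Icc.image_of_continuousOn hf

end IsEdgePath

theorem ContinuousOn.isEdgePath_image_Icc {σ : ℝ → X} {a b : ℝ} {A B : Set X}
    (hσ : ContinuousOn σ (Icc a b)) (hab : a ≤ b) (ha : σ a ∈ A) (hb : σ b ∈ B) :
    IsEdgePath (σ '' Icc a b) A B := by
  have hline : AffineMap.lineMap a b '' Icc (0 : ℝ) 1 = Icc a b := by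
    rw [← segment_eq_image_lineMap, segment_eq_Icc hab]
  refine ⟨σ ∘ AffineMap.lineMap a b, hσ.comp (AffineMap.lineMap_continuous).continuousOn ?_, ?_,
    by simpa using ha, by simpa using hb⟩
  · exact fun t ht => hline ▸ mem_image_of_mem _ ht
  · rw [image_comp, hline]

end

section

variable {X : Type*} [MetricSpace X]

theorem IsLengthSpace.joinedIn_closedBall_s14 (hX : IsLengthSpace X) (x y : X) {ε : ℝ} (hε : 0 < ε) :
    JoinedIn (closedBall x (dist x y + ε)) x y := by
  obtain ⟨f, hf, hf0, hf1, hvar⟩ := hX x y ε hε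
  refine ⟨⟨⟨fun t => f t, hf.comp_continuous continuous_subtype_val fun t => t.2⟩,
    by simpa using hf0, by simpa using hf1⟩, fun t => ?_⟩
  have hft := (eVariationOn.edist_le f t.2 (left_mem_Icc.2 zero_le_one)).trans hvar
  rwa [hf0, edist_dist, ENNReal.ofReal_le_ofReal_iff (by positivity)] at hft

theorem IsLengthSpace.locallyPathConnectedSpace (hX : IsLengthSpace X) :
    LocallyPathConnectedSpace X := by
  refine locallyPathConnectedSpace_iff_pathComponentIn_mem_nhds.2 fun x u hu hxu => ?_
  obtain ⟨r, hr, hru⟩ := Metric.isOpen_iff.1 hu x hxu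
  refine Filter.mem_of_superset (ball_mem_nhds x (half_pos hr)) fun y hy => ?_
  refine (hX.joinedIn_closedBall_s14 x y (half_pos hr)).mono ((closedBall_subset_ball ?_).trans hru)
  rw [mem_ball, dist_comm] at hy
  linarith

namespace IsNormalRay

variable {Y M : Set X} {σ : ℝ → X} {K R a b t : ℝ}

theorem dist_zero (h : IsNormalRay Y σ) (ht : 0 ≤ t) : dist (σ t) (σ 0) = t := by
  rw [h.dist_eq t 0 ht le_rfl, sub_zero, abs_of_nonneg ht]

theorem dist_le (h : IsNormalRay Y σ) (ht : 0 ≤ t) (x : X) : dist x (σ t) ≤ dist x (σ 0) + t := by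
  have := dist_triangle x (σ 0) (σ t)
  rwa [dist_comm (σ 0), h.dist_zero ht] at this

theorem le_dist (h : IsNormalRay Y σ) (ht : 0 ≤ t) {z : X} (hz : z ∈ Y) : t ≤ dist (σ t) z :=
  (h.infDist_eq t ht).symm.trans_le (infDist_le_dist_of_mem hz)

theorem continuousOn (h : IsNormalRay Y σ) : ContinuousOn σ (Ici 0) :=
  (LipschitzOnWith.of_dist_le_mul (K := 1) fun s hs t ht => by
    simp [h.dist_eq s t hs ht, Real.dist_eq]).continuousOn

theorem comp_isometry (h : IsNormalRay Y σ) {φ : X → X} (hφ : Isometry φ) (hφY : φ '' Y = Y) :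
    IsNormalRay Y (φ ∘ σ) where
  dist_eq s t hs ht := by simp only [Function.comp_apply, hφ.dist_eq, h.dist_eq s t hs ht]
  infDist_eq t ht := by rw [Function.comp_apply, ← hφY, infDist_image hφ, h.infDist_eq t ht]

theorem farApart_image_Icc (h : IsNormalRay Y σ) (ha : 0 ≤ a) (hKa : K < a) :
    FarApart K (σ '' Icc a b) Y := by
  rintro _ ⟨t, ht, rfl⟩ z hz
  exact hKa.trans_le (ht.1.trans (h.le_dist (ha.trans ht.1) hz))

theorem not_isBounded_image_Ici (h : IsNormalRay Y σ) (ha : 0 ≤ a) :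
    ¬ IsBounded (σ '' Ici a) := by
  intro hb
  obtain ⟨r, hr⟩ := hb.subset_closedBall (σ a)
  have hfar := hr (mem_image_of_mem σ
    (show a + |r| + 1 ∈ Ici a by rw [mem_Ici]; linarith [abs_nonneg r]))
  rw [mem_closedBall, h.dist_eq _ _ (by positivity) ha, add_assoc, add_sub_cancel_left,
    abs_of_pos (by positivity)] at hfar
  linarith [le_abs_self r]

theorem image_Ici_subset_compl_cthickening (h : IsNormalRay Y σ) (hMY : M ⊆ Y) (hR : 0 ≤ R)
    (hRa : R < a) : σ '' Ici a ⊆ (cthickening R M)ᶜ := by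
  rintro _ ⟨t, ht, rfl⟩ hmem
  have ht0 : 0 ≤ t := hR.trans (hRa.trans_le ht).le
  have hinf : ENNReal.ofReal t ≤ infEDist (σ t) M := le_infEDist.2 fun z hz => by
    rw [edist_dist]
    exact ENNReal.ofReal_le_ofReal (h.le_dist ht0 (hMY hz))
  have := (ENNReal.ofReal_le_ofReal_iff hR).1 (hinf.trans (mem_cthickening_iff.1 hmem))
  linarith [mem_Ici.1 ht]

theorem joinedIn_closedBall_s14 (h : IsNormalRay Y σ) (hX : IsLengthSpace X) (y : X) (ha : 0 < a)
    {r : ℝ} (hr : dist y (σ 0) + a ≤ r) : JoinedIn (closedBall y r) y (σ a) := by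
  have hstart : JoinedIn (closedBall y r) y (σ 0) :=
    (hX.joinedIn_closedBall_s14 y (σ 0) ha).mono (closedBall_subset_closedBall hr)
  have hray : JoinedIn (σ '' Icc 0 a) (σ 0) (σ a) :=
    (((convex_Icc 0 a).isPathConnected (nonempty_Icc.2 ha.le)).image'
      (h.continuousOn.mono Icc_subset_Ici_self)).joinedIn _
      (mem_image_of_mem σ (left_mem_Icc.2 ha.le)) _ (mem_image_of_mem σ (right_mem_Icc.2 ha.le))
  refine hstart.trans (hray.mono ?_)
  rintro _ ⟨t, ht, rfl⟩
  rw [mem_closedBall, dist_comm]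
  linarith [h.dist_le ht.1 y, ht.2]

theorem exists_smul_near {G : Type*} [Group G] [MulAction G X] {ρ : ℝ → X} (hρ : IsNormalRay Y ρ)
    (hiso : ∀ g : G, Isometry (fun x : X => g • x))
    (hYinv : ∀ g : G, (fun x : X => g • x) '' Y = Y) {B : ℝ} {y₀ : X}
    (hcobound : ∀ y ∈ Y, ∃ g : G, dist y (g • y₀) ≤ B) (hρ0 : ρ 0 ∈ Y) {y : X} (hy : y ∈ Y) :
    ∃ σ, IsNormalRay Y σ ∧ dist y (σ 0) ≤ 2 * B := by
  obtain ⟨g₀, hg₀⟩ := hcobound _ hρ0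
  obtain ⟨g, hg⟩ := hcobound y hy
  refine ⟨(fun x => (g * g₀⁻¹) • x) ∘ ρ, hρ.comp_isometry (hiso _) (hYinv _), ?_⟩
  have htrans : dist (g • y₀) ((g * g₀⁻¹) • ρ 0) = dist (g₀ • y₀) (ρ 0) := by
    rw [← (hiso (g * g₀⁻¹)).dist_eq (g₀ • y₀), smul_smul, inv_mul_cancel_right]
  calc dist y ((g * g₀⁻¹) • ρ 0) ≤ dist y (g • y₀) + dist (g • y₀) ((g * g₀⁻¹) • ρ 0) :=
        dist_triangle _ _ _
    _ ≤ B + B := add_le_add hg (by rw [htrans, dist_comm]; exact hg₀)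
    _ = 2 * B := by ring

end IsNormalRay

theorem IsOneEnded.exists_isPathConnected_superset [LocallyPathConnectedSpace X]
    (hX : IsOneEnded X) {C : Set X} (hC : IsBounded C) (hCc : IsClosed C) :
    ∃ W ⊆ Cᶜ, IsPathConnected W ∧ ∀ T ⊆ Cᶜ, IsPreconnected T → ¬ IsBounded T → T ⊆ W := by
  obtain ⟨W, ⟨⟨x, hx, rfl⟩, -⟩, hWuniq⟩ := hX C hC
  refine ⟨_, connectedComponentIn_subset _ _, hCc.isOpen_compl.connectedComponentIn
    |>.isConnected_iff_isPathConnected.1 (isConnected_connectedComponentIn_iff.2 hx),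
    fun T hTC hT hTb => ?_⟩
  obtain ⟨z, hz⟩ : T.Nonempty := nonempty_iff_ne_empty.2 fun hT0 => hTb (hT0 ▸ isBounded_empty)
  have hTz := hT.subset_connectedComponentIn hz hTC
  rwa [hWuniq _ ⟨⟨z, hTC hz, rfl⟩, fun hb => hTb (hb.subset hTz)⟩] at hTz

theorem IsOneEnded.exists_far_isPathConnected [LocallyPathConnectedSpace X] (hX : IsOneEnded X)
    {M Y : Set X} (hM : IsBounded M) (hMY : M ⊆ Y) {R : ℝ} (hR : 0 ≤ R) :
    ∃ W, IsPathConnected W ∧ FarApart R M W ∧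
      ∀ σ, IsNormalRay Y σ → ∀ t, R < t → σ t ∈ W := by
  obtain ⟨W, hWC, hW, hTW⟩ := hX.exists_isPathConnected_superset hM.cthickening isClosed_cthickening
  refine ⟨W, hW, fun p hp w hw => ?_, fun σ hσ t ht => ?_⟩
  · by_contra! hle
    exact hWC hw (mem_cthickening_of_dist_le w p R M hp (by rwa [dist_comm]))
  · have ht0 : 0 ≤ t := hR.trans ht.le
    exact hTW _ (hσ.image_Ici_subset_compl_cthickening hMY hR ht)
      (isPreconnected_Ici.image _ (hσ.continuousOn.mono (Ici_subset_Ici.2 ht0)))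
      (hσ.not_isBounded_image_Ici ht0) (mem_image_of_mem σ self_mem_Ici)

end

instance : PathConnectedSpace unitInterval :=
  isPathConnected_iff_pathConnectedSpace.1 ((convex_Icc 0 1).isPathConnected ⟨0, by simp⟩)

theorem IsPathConnected.exists_isCompact_subset {T : Type*} [TopologicalSpace T] {U s : Set T}
    (hU : IsPathConnected U) (hs : s.Finite) (hsU : s ⊆ U) :
    ∃ S ⊆ U, s ⊆ S ∧ IsCompact S ∧ IsPathConnected S := by
  induction s, hs using Set.Finite.induction_on with
  | empty =>
    obtain ⟨x, hx⟩ := hU.nonempty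
    exact ⟨{x}, singleton_subset_iff.2 hx, empty_subset _, isCompact_singleton,
      isPathConnected_singleton x⟩
  | @insert z s _ _ ih =>
    obtain ⟨S, hSU, hsS, hSc, hS⟩ := ih ((subset_insert z s).trans hsU)
    obtain ⟨x, hx⟩ := hS.nonempty
    obtain ⟨γ, hγ⟩ := hU.joinedIn x (hSU hx) z (hsU (mem_insert z s))
    exact ⟨S ∪ range γ, union_subset hSU (range_subset_iff.2 hγ),
      insert_subset (Or.inr ⟨1, γ.target⟩) (hsS.trans subset_union_left),
      hSc.union (isCompact_range γ.continuous),
      hS.union (isPathConnected_range γ.continuous) ⟨x, hx, 0, γ.source⟩⟩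

def minorSupport {X V : Type*} (H : SimpleGraph V) (U : V → Set X) (P : V → V → Set X) : Set X :=
  (⋃ v, U v) ∪ ⋃ (u) (v) (_ : H.Adj u v), P u v

section

variable {X V : Type*} {H : SimpleGraph V} {U : V → Set X} {P : V → V → Set X}

theorem subset_minorSupport_branch (v : V) : U v ⊆ minorSupport H U P :=
  (subset_iUnion U v).trans subset_union_left

theorem subset_minorSupport_edge {u v : V} (huv : H.Adj u v) : P u v ⊆ minorSupport H U P :=
  (subset_iUnion₂_of_subset u v (subset_iUnion_of_subset huv (subset_refl (P u v)))).trans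
    subset_union_right

theorem minorSupport_subset {Y : Set X} (hU : ∀ v, U v ⊆ Y)
    (hP : ∀ u v, H.Adj u v → P u v ⊆ Y) : minorSupport H U P ⊆ Y :=
  union_subset (iUnion_subset hU) (iUnion₂_subset fun u v => iUnion_subset (hP u v))

end

section

variable {X : Type*} [MetricSpace X] {V : Type*} {H : SimpleGraph V} {K D : ℝ}
  {U U' : V → Set X} {P : V → V → Set X}

namespace IsFatMinor

theorem mono (h : IsFatMinor H D U P) (hK : K ≤ D) : IsFatMinor H K U P := by
  obtain ⟨hU, hPsymm, hPedge, hUU, hPU, hPP⟩ := h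
  exact ⟨hU, hPsymm, hPedge, fun u v huv => FarApart.mono (hUU u v huv) hK le_rfl le_rfl,
    fun u v w huv hwu hwv => FarApart.mono (hPU u v w huv hwu hwv) hK le_rfl le_rfl,
    fun u v u' v' huv hu'v' hne => FarApart.mono (hPP u v u' v' huv hu'v' hne) hK le_rfl le_rfl⟩

theorem of_subset (h : IsFatMinor H K U P) (hU' : ∀ v, IsPathConnected (U' v))
    (hsub : ∀ v, U' v ⊆ U v) (hedge : ∀ u v, H.Adj u v → IsEdgePath (P u v) (U' u) (U' v)) :
    IsFatMinor H K U' P := by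
  obtain ⟨-, hPsymm, -, hUU, hPU, hPP⟩ := h
  exact ⟨hU', hPsymm, hedge,
    fun u v huv => FarApart.mono (hUU u v huv) le_rfl (hsub u) (hsub v),
    fun u v w huv hwu hwv => FarApart.mono (hPU u v w huv hwu hwv) le_rfl le_rfl (hsub w),
    hPP⟩

theorem exists_isCompact_subset [Finite V] (h : IsFatMinor H K U P) :
    ∃ U' : V → Set X, (∀ v, U' v ⊆ U v) ∧ (∀ v, IsCompact (U' v)) ∧ IsFatMinor H K U' P := by
  choose f hf hfP hf0 hf1 using h.2.2.1
  let ends v := ⋃ (w) (hvw : H.Adj v w), {f v w hvw 0, f w v hvw.symm 1}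
  have hends : ∀ v, (ends v).Finite := fun v =>
    finite_iUnion fun w => finite_iUnion fun _ => toFinite _
  have hendsU : ∀ v, ends v ⊆ U v := fun v => iUnion₂_subset fun w hvw =>
    insert_subset (hf0 v w hvw) (singleton_subset_iff.2 (hf1 w v hvw.symm))
  choose U' hU'U hendsU' hU'c hU' using fun v =>
    (h.1 v).exists_isCompact_subset (hends v) (hendsU v)
  refine ⟨U', hU'U, hU'c, h.of_subset hU' hU'U fun u v huv =>
    ⟨f u v huv, hf u v huv, hfP u v huv, hendsU' u ?_, hendsU' v ?_⟩⟩
  · exact mem_iUnion₂.2 ⟨v, huv, Or.inl rfl⟩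
  · exact mem_iUnion₂.2 ⟨u, huv.symm, Or.inr rfl⟩

theorem isCompact_minorSupport [Finite V] (h : IsFatMinor H K U P) (hU : ∀ v, IsCompact (U v)) :
    IsCompact (minorSupport H U P) :=
  (isCompact_iUnion hU).union <| isCompact_iUnion fun u => isCompact_iUnion fun v =>
    isCompact_iUnion fun huv => IsEdgePath.isCompact (h.2.2.1 u v huv)

theorem union_closedBall (h : IsFatMinor H D U P) {r : ℝ} (hr : 0 ≤ r) {y : V → X}
    (hy : ∀ v, y v ∈ U v) {N : V → Set X} (hN : ∀ v, IsPathConnected (N v))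
    (hyN : ∀ v, y v ∈ N v) (hNr : ∀ v, N v ⊆ closedBall (y v) r) :
    IsFatMinor H (D - 2 * r) (fun v => U v ∪ N v) P := by
  obtain ⟨hU, hPsymm, hPedge, hUU, hPU, hPP⟩ := h
  have hUN : ∀ v, U v ∪ N v ⊆ U v ∪ closedBall (y v) r := fun v =>
    union_subset_union_right _ (hNr v)
  refine ⟨fun v => (hU v).union (hN v) ⟨y v, hy v, hyN v⟩, hPsymm,
    fun u v huv => IsEdgePath.mono (hPedge u v huv) subset_union_left subset_union_left,
    fun u v huv => ?_, fun u v w huv hwu hwv => ?_,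
    fun u v u' v' huv hu'v' hne => FarApart.mono (hPP u v u' v' huv hu'v' hne)
      (by linarith) le_rfl le_rfl⟩
  · have := ((FarApart.union_closedBall_left (hUU u v huv) (hy u) hr).symm
      |>.union_closedBall_left (hy v) hr).symm
    exact this.mono (by linarith) (hUN u) (hUN v)
  · have := ((FarApart.symm (hPU u v w huv hwu hwv)).union_closedBall_left (hy w) hr).symm
    exact this.mono (by linarith) le_rfl (hUN w)

end IsFatMinor

end

section

variable {X : Type*} {m : ℕ} {P : Fin m → Fin m → Set X} {Q : Fin m → Set X}

@[simp]
theorem snocEdges_castSucc_castSucc (u v : Fin m) :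
    snocEdges P Q u.castSucc v.castSucc = P u v := by
  simp [snocEdges]

@[simp]
theorem snocEdges_castSucc_last (u : Fin m) : snocEdges P Q u.castSucc (Fin.last m) = Q u := by
  simp [snocEdges]

@[simp]
theorem snocEdges_last_castSucc (v : Fin m) : snocEdges P Q (Fin.last m) v.castSucc = Q v := by
  simp [snocEdges]

theorem snocEdges_cases {i j : Fin (m + 1)} (hij : i ≠ j) :
    (∃ u v, u ≠ v ∧ s(i, j) = s(u.castSucc, v.castSucc) ∧ snocEdges P Q i j = P u v) ∨
      ∃ u, s(i, j) = s(u.castSucc, Fin.last m) ∧ snocEdges P Q i j = Q u := by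
  cases i using Fin.lastCases with
  | last =>
    cases j using Fin.lastCases with
    | last => exact absurd rfl hij
    | cast v => exact Or.inr ⟨v, Sym2.eq_swap, snocEdges_last_castSucc v⟩
  | cast u =>
    cases j using Fin.lastCases with
    | last => exact Or.inr ⟨u, rfl, snocEdges_castSucc_last u⟩
    | cast v => exact Or.inl ⟨u, v, fun h => hij (h ▸ rfl), rfl, snocEdges_castSucc_castSucc u v⟩

end

section

variable {X : Type*} [MetricSpace X] {m : ℕ} {K : ℝ} {U : Fin m → Set X}
  {P : Fin m → Fin m → Set X} {Q : Fin m → Set X}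

theorem farApart_snocEdges_lastCases {W : Set X}
    (hPU : ∀ u v w, u ≠ v → w ≠ u → w ≠ v → FarApart K (P u v) (U w))
    (hPW : ∀ u v, u ≠ v → FarApart K (P u v) W) (hQU : ∀ v w, v ≠ w → FarApart K (Q v) (U w))
    {i j w : Fin (m + 1)} (hij : i ≠ j) (hwi : w ≠ i) (hwj : w ≠ j) :
    FarApart K (snocEdges P Q i j) (Fin.lastCases W U w) := by
  have hw : w ∉ s(i, j) := by simp [Sym2.mem_iff, hwi, hwj]
  rcases snocEdges_cases (P := P) (Q := Q) hij with ⟨u, v, huv, hs, hP⟩ | ⟨u, hs, hP⟩ <;>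
    rw [hP] <;> rw [hs] at hw <;> cases w using Fin.lastCases
  · simpa using hPW u v huv
  · simp only [Sym2.mem_iff, Fin.castSucc_inj, not_or] at hw
    simpa using hPU u v _ huv hw.1 hw.2
  · simp at hw
  · simp only [Sym2.mem_iff, Fin.castSucc_inj, not_or] at hw
    simpa using hQU u _ (Ne.symm hw.1)

theorem farApart_snocEdges_snocEdges
    (hPP : ∀ u v u' v', u ≠ v → u' ≠ v' → s(u, v) ≠ s(u', v') → FarApart K (P u v) (P u' v'))
    (hPQ : ∀ u v w, u ≠ v → FarApart K (P u v) (Q w))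
    (hQQ : ∀ v w, v ≠ w → FarApart K (Q v) (Q w))
    {i j i' j' : Fin (m + 1)} (hij : i ≠ j) (hij' : i' ≠ j') (hne : s(i, j) ≠ s(i', j')) :
    FarApart K (snocEdges P Q i j) (snocEdges P Q i' j') := by
  rcases snocEdges_cases (P := P) (Q := Q) hij with ⟨u, v, huv, hs, hP⟩ | ⟨u, hs, hP⟩ <;>
    rcases snocEdges_cases (P := P) (Q := Q) hij' with
      ⟨u', v', hu'v', hs', hP'⟩ | ⟨u', hs', hP'⟩ <;>
    rw [hP, hP'] <;> rw [hs, hs'] at hne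
  · refine hPP u v u' v' huv hu'v' fun huv' => hne ?_
    rw [← Sym2.map_mk, ← Sym2.map_mk, huv']
  · exact hPQ u v u' huv
  · exact (hPQ u' v' u hu'v').symm
  · exact hQQ u u' fun huu' => hne (huu' ▸ rfl)

theorem IsFatMinor.top_succ {W : Set X} (h : IsFatMinor ⊤ K U P) (hW : IsPathConnected W)
    (hQ : ∀ v, IsEdgePath (Q v) (U v) W) (hUW : ∀ v, FarApart K (U v) W)
    (hPW : ∀ u v, u ≠ v → FarApart K (P u v) W) (hQU : ∀ v w, v ≠ w → FarApart K (Q v) (U w))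
    (hPQ : ∀ u v w, u ≠ v → FarApart K (P u v) (Q w))
    (hQQ : ∀ v w, v ≠ w → FarApart K (Q v) (Q w)) :
    IsFatMinor ⊤ K (Fin.lastCases W U) (snocEdges P Q) := by
  obtain ⟨hU, hPsymm, hPedge, hUU, hPU, hPP⟩ := h
  simp only [SimpleGraph.top_adj] at hPedge hPU hPP ⊢
  refine ⟨fun i => ?_, fun i j => ?_, fun i j hij => ?_, fun i j hij => ?_,
    fun i j w hij => farApart_snocEdges_lastCases hPU hPW hQU hij,
    fun i j i' j' hij hij' => farApart_snocEdges_snocEdges hPP hPQ hQQ hij hij'⟩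
  · cases i using Fin.lastCases <;> simp [hW, hU]
  · cases i using Fin.lastCases <;> cases j using Fin.lastCases <;> simp [snocEdges, hPsymm]
  · show IsEdgePath _ _ _
    cases i using Fin.lastCases with
    | last =>
      cases j using Fin.lastCases with
      | last => exact absurd rfl hij
      | cast v => simpa using (hQ v).symm
    | cast u =>
      cases j using Fin.lastCases with
      | last => simpa using hQ u
      | cast v =>
        simp only [snocEdges_castSucc_castSucc, Fin.lastCases_castSucc]
        exact hPedge u v fun huv => hij (huv ▸ rfl)
  · show FarApart _ _ _
    cases i using Fin.lastCases with
    | last =>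
      cases j using Fin.lastCases with
      | last => exact absurd rfl hij
      | cast v => simpa using (hUW v).symm
    | cast u =>
      cases j using Fin.lastCases with
      | last => simpa using hUW u
      | cast v =>
        simp only [Fin.lastCases_castSucc]
        exact hUU u v fun huv => hij (huv ▸ rfl)

end

theorem IsFatMinor.exists_top_succ_of_isNormalRay {X : Type*} [MetricSpace X]
    (hX : IsLengthSpace X) {m : ℕ} {K B : ℝ} (hK : 0 < K) (hB : 0 ≤ B) {Y W : Set X}
    {U : Fin m → Set X} {P : Fin m → Fin m → Set X} (h : IsFatMinor ⊤ (10 * (K + B)) U P)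
    (hUY : ∀ v, U v ⊆ Y) (hPY : ∀ u v, u ≠ v → P u v ⊆ Y) {y : Fin m → X} (hy : ∀ v, y v ∈ U v)
    {σ : Fin m → ℝ → X} (hσ : ∀ v, IsNormalRay Y (σ v)) (hσy : ∀ v, dist (y v) (σ v 0) ≤ 2 * B)
    (hW : IsPathConnected W) (hUW : ∀ v, FarApart (2 * B + 3 * K) (U v) W)
    (hPW : ∀ u v, u ≠ v → FarApart (2 * B + 3 * K) (P u v) W)
    (hσW : ∀ v, σ v (2 * B + 4 * K) ∈ W) :
    ∃ (U' : Fin (m + 1) → Set X) (P' : Fin (m + 1) → Fin (m + 1) → Set X),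
      IsFatMinor ⊤ K U' P' := by
  set N : Fin m → Set X := fun v => pathComponentIn (closedBall (y v) (2 * B + 2 * K)) (y v)
  have hyB : ∀ v, y v ∈ closedBall (y v) (2 * B + 2 * K) := fun v =>
    mem_closedBall_self (by positivity)
  have hyN : ∀ v, y v ∈ N v := fun v => mem_pathComponentIn_self (hyB v)
  have hσN : ∀ v, σ v (2 * K) ∈ N v := fun v =>
    (hσ v).joinedIn_closedBall_s14 hX (y v) (by positivity) (by linarith [hσy v])
  have hfat : IsFatMinor ⊤ K (fun v => U v ∪ N v) P :=
    (h.union_closedBall (by positivity) hy (fun v => isPathConnected_pathComponentIn (hyB v))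
      hyN fun _ => pathComponentIn_subset).mono (by linarith)
  set Q : Fin m → Set X := fun v => σ v '' Icc (2 * K) (2 * B + 4 * K)
  have hQ : ∀ v, IsEdgePath (Q v) (U v ∪ N v) W := fun v =>
    ((hσ v).continuousOn.mono fun t ht => show 0 ≤ t by linarith [ht.1]).isEdgePath_image_Icc
      (by linarith) (Or.inr (hσN v)) (hσW v)
  have hQY : ∀ v, FarApart K (Q v) Y := fun v =>
    (hσ v).farApart_image_Icc (by positivity) (by linarith)
  have hQball : ∀ v, Q v ⊆ closedBall (y v) (4 * B + 4 * K) := by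
    rintro v _ ⟨t, ht, rfl⟩
    rw [mem_closedBall, dist_comm]
    linarith [(hσ v).dist_le (show 0 ≤ t by linarith [ht.1]) (y v), hσy v, ht.2]
  have hyy : ∀ v w, v ≠ w → 10 * (K + B) < dist (y v) (y w) := fun v w hvw =>
    h.2.2.2.1 v w hvw _ (hy v) _ (hy w)
  refine ⟨_, _, hfat.top_succ hW hQ (fun v => ?_) (fun u v huv => ?_) (fun v w hvw => ?_)
    (fun u v w huv => ?_) (fun v w hvw => ?_)⟩
  · exact ((hUW v).union_closedBall_left (hy v) (by positivity)).mono (by linarith)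
      (union_subset_union_right _ pathComponentIn_subset) subset_rfl
  · exact (hPW u v huv).mono (by linarith) subset_rfl subset_rfl
  · refine (FarApart.union_left ((hQY v).symm.mono le_rfl (hUY w) subset_rfl) ?_).symm
    exact (farApart_closedBall_closedBall (hyy v w hvw)).symm.mono (by linarith)
      pathComponentIn_subset (hQball v)
  · exact (hQY w).symm.mono le_rfl (hPY u v huv) subset_rfl
  · exact (farApart_closedBall_closedBall (hyy v w hvw)).mono (by linarith) (hQball v) (hQball w)

theorem fatMinor_extend_one_ended_general {X : Type*} [MetricSpace X] (hlen : IsLengthSpace X)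
    (hone : ∀ C : Set X, Bornology.IsBounded C →
      ∃! W : Set X, (∃ x ∈ Cᶜ, W = connectedComponentIn Cᶜ x) ∧ ¬ Bornology.IsBounded W)
    (G : Type*) [Group G] [MulAction G X]
    (hiso : ∀ g : G, Isometry (fun x : X => g • x))
    (Y : Set X) (hYinv : ∀ g : G, (fun x : X => g • x) '' Y = Y)
    (B : ℝ) (hB : 0 < B) (y₀ : X)
    (hcobound : ∀ y ∈ Y, ∃ g : G, dist y (g • y₀) ≤ B)
    (ρ : ℝ → X)
    (hρgeo : ∀ s t : ℝ, 0 ≤ s → 0 ≤ t → dist (ρ s) (ρ t) = |s - t|)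
    (hρ0 : ρ 0 ∈ Y) (hρnormal : ∀ t : ℝ, 0 ≤ t → infDist (ρ t) Y = t)
    (m : ℕ) (K : ℝ) (hK : 1 ≤ K)
    (U : Fin m → Set X) (P : Fin m → Fin m → Set X)
    (hfat : IsFatMinor (⊤ : SimpleGraph (Fin m)) (10 * (K + B)) U P)
    (hUY : ∀ v, U v ⊆ Y)
    (hPY : ∀ u v : Fin m, u ≠ v → P u v ⊆ Y) :
    ∃ (U' : Fin (m + 1) → Set X) (P' : Fin (m + 1) → Fin (m + 1) → Set X),
      IsFatMinor (⊤ : SimpleGraph (Fin (m + 1))) K U' P' := by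
  have hK0 : 0 < K := by linarith
  have := hlen.locallyPathConnectedSpace
  have hρ : IsNormalRay Y ρ := ⟨hρgeo, hρnormal⟩
  obtain ⟨V, hVU, hVc, hV⟩ := hfat.exists_isCompact_subset
  have hVY : ∀ v, V v ⊆ Y := fun v => (hVU v).trans (hUY v)
  choose y hy using fun v => (hV.1 v).nonempty
  choose σ hσ hσy using fun v => hρ.exists_smul_near hiso hYinv hcobound hρ0 (hVY v (hy v))
  obtain ⟨W, hW, hMW, hσW⟩ := IsOneEnded.exists_far_isPathConnected hone
    (hV.isCompact_minorSupport hVc).isBounded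
    (minorSupport_subset hVY fun u v huv => hPY u v ((SimpleGraph.top_adj u v).1 huv))
    (by positivity : 0 ≤ 2 * B + 3 * K)
  exact hV.exists_top_succ_of_isNormalRay hlen hK0 hB.le hVY hPY hy hσ hσy hW
    (fun v => hMW.mono le_rfl (subset_minorSupport_branch v) subset_rfl)
    (fun u v huv => hMW.mono le_rfl
      (subset_minorSupport_edge ((SimpleGraph.top_adj u v).2 huv)) subset_rfl)
    fun v => hσW _ (hσ v) _ (by linarith)

/-- In a one-ended length space, a `10(K+B)`-fat `K_m`-minor lying in a subset `Y`, on
which a group acts `B`-coboundedly by isometries, together with a geodesic ray normal to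
`Y`, can be extended to a `K`-fat `K_{m+1}`-minor. -/
theorem fatMinor_extend_one_ended {X : Type*} [MetricSpace X] (hlen : IsLengthSpace X)
    (hone : ∀ C : Set X, Bornology.IsBounded C →
      ∃! W : Set X, (∃ x ∈ Cᶜ, W = connectedComponentIn Cᶜ x) ∧ ¬ Bornology.IsBounded W)
    (G : Type*) [Group G] [MulAction G X]
    (hiso : ∀ g : G, Isometry (fun x : X => g • x))
    (Y : Set X) (hYinv : ∀ g : G, (fun x : X => g • x) '' Y = Y)
    (B : ℝ) (hB : 0 < B) (y₀ : X) (hy₀ : y₀ ∈ Y)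
    (hcobound : ∀ y ∈ Y, ∃ g : G, dist y (g • y₀) ≤ B)
    (ρ : ℝ → X)
    (hρgeo : ∀ s t : ℝ, 0 ≤ s → 0 ≤ t → dist (ρ s) (ρ t) = |s - t|)
    (hρ0 : ρ 0 ∈ Y) (hρnormal : ∀ t : ℝ, 0 ≤ t → infDist (ρ t) Y = t)
    (m : ℕ) (K : ℝ) (hK : 1 ≤ K)
    (U : Fin m → Set X) (P : Fin m → Fin m → Set X)
    (hfat : IsFatMinor (⊤ : SimpleGraph (Fin m)) (10 * (K + B)) U P)
    (hUY : ∀ v, U v ⊆ Y)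
    (hPY : ∀ u v : Fin m, u ≠ v → P u v ⊆ Y) :
    ∃ (U' : Fin (m + 1) → Set X) (P' : Fin (m + 1) → Fin (m + 1) → Set X),
      IsFatMinor (⊤ : SimpleGraph (Fin (m + 1))) K U' P' :=
  fatMinor_extend_one_ended_general hlen hone G hiso Y hYinv B hB y₀ hcobound ρ hρgeo hρ0 hρnormal m
    K hK U P hfat hUY hPY
end

section
/- Constant-height paths in finitely presented groups: let G be a finitely presented group with Cayley graph X corresponding to a finite presentation, and let ε₀ be the length of the longest defining relator. Let γ ⊂ X be a bi-infinite geodesic and r ≥ 0. If a, b ∈ X satisfy dist(a, γ) = dist(b, γ) = r and there exists a path from a to b disjoint from the open (r−1)-neighbourhood N_{r−1}(γ), then there exists a path p from a to b contained in the annulus A_{r±ε₀}(γ) = {x : r − ε₀ ≤ dist(x, γ) ≤ r + ε₀}. -/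
/-!
Besides `p`, which stays at height `≥ r`, there is a walk `p'` from `a` to `b` at height `≤ r`:
down to `γ`, along `γ`, and back up. Both spell words representing `a⁻¹ b`, so the mod 2 edge
chain of `p` plus that of `p'` is a sum of translated relator cells. A cell that dips below
height `r` has diameter at most `ε₀`, so it lies below `r + ε₀`; the cells at height `≥ r` sum
to a cycle `C`. Then `C + chain(p)` equals `D + chain(p')`, where `D` is the sum of the remaining
cells, so it is a chain of edges in the annulus with odd degree exactly at `a` and `b`, and such
a chain contains a walk from `a` to `b`.
-/

open Set

/-- The Cayley graph of a group with respect to a generating set `S`. -/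
def cayley (G : Type*) [Group G] (S : Set G) : SimpleGraph G :=
  SimpleGraph.fromRel (fun x y => x⁻¹ * y ∈ S)

/-- The group defined by the presentation `⟨Fin n ∣ Rel⟩`. -/
abbrev presGroup (n : ℕ) (Rel : Set (FreeGroup (Fin n))) : Type :=
  FreeGroup (Fin n) ⧸ Subgroup.normalClosure Rel

/-- The images of the standard generators in the presented group. -/
def presGens (n : ℕ) (Rel : Set (FreeGroup (Fin n))) : Set (presGroup n Rel) :=
  Set.range fun i : Fin n => (QuotientGroup.mk (FreeGroup.of i) : presGroup n Rel)

/-- The Cayley graph of the presented group with respect to its standard generators. -/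
def presCayley (n : ℕ) (Rel : Set (FreeGroup (Fin n))) : SimpleGraph (presGroup n Rel) :=
  cayley _ (presGens n Rel)

/-- Natural-number distance from a vertex to a set of vertices in a graph. -/
noncomputable def ndistSet {V : Type*} (G : SimpleGraph V) (x : V) (A : Set V) : ℕ :=
  sInf {d : ℕ | ∃ a ∈ A, G.dist x a = d}

open scoped symmDiff

lemma Finset.cast_card_symmDiff_zmod_two {α : Type*} [DecidableEq α] (s t : Finset α) :
    ((s ∆ t).card : ZMod 2) = s.card + t.card := by
  rw [Finset.symmDiff_def, Finset.card_union_of_disjoint disjoint_sdiff_sdiff,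
    ← Finset.card_sdiff_add_card_inter s t, ← Finset.card_sdiff_add_card_inter t s,
    Finset.inter_comm t s]
  push_cast
  linear_combination -CharTwo.add_self_eq_zero ((s ∩ t).card : ZMod 2)

section EdgeChains

variable {V : Type*} [DecidableEq V]

def degMod2 (E : Finset (Sym2 V)) (v : V) : ZMod 2 :=
  ((E.filter (v ∈ ·)).card : ZMod 2)

def boundaryMod2 (a b : V) : V → ZMod 2 :=
  Pi.single a 1 + Pi.single b 1

def edgeChain (x y : V) : Finset (Sym2 V) :=
  if x = y then ∅ else {s(x, y)}

lemma boundaryMod2_self (a : V) : boundaryMod2 a a = 0 :=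
  funext fun v => CharTwo.add_self_eq_zero ((Pi.single a 1 : V → ZMod 2) v)

lemma boundaryMod2_add_boundaryMod2 (a b c : V) :
    boundaryMod2 a b + boundaryMod2 b c = boundaryMod2 a c := by
  ext v
  simp only [boundaryMod2, Pi.add_apply]
  linear_combination CharTwo.add_self_eq_zero ((Pi.single b 1 : V → ZMod 2) v)

lemma degMod2_empty : degMod2 (∅ : Finset (Sym2 V)) = 0 := by
  ext v; simp [degMod2]

lemma degMod2_symmDiff (E F : Finset (Sym2 V)) :
    degMod2 (E ∆ F) = degMod2 E + degMod2 F := by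
  ext v
  have hfilter : (E ∆ F).filter (v ∈ ·) = E.filter (v ∈ ·) ∆ F.filter (v ∈ ·) := by
    ext e; simp only [Finset.mem_filter, Finset.mem_symmDiff]; tauto
  rw [Pi.add_apply, degMod2, hfilter, Finset.cast_card_symmDiff_zmod_two]
  rfl

lemma exists_mem_of_degMod2_ne_zero {E : Finset (Sym2 V)} {v : V} (h : degMod2 E v ≠ 0) :
    ∃ e ∈ E, v ∈ e := by
  by_contra! hE
  exact h (by simp [degMod2, Finset.filter_false_of_mem hE])

lemma mem_edgeChain {x y : V} {e : Sym2 V} : e ∈ edgeChain x y ↔ x ≠ y ∧ e = s(x, y) := by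
  unfold edgeChain; split_ifs <;> simp [*]

lemma edgeChain_comm (x y : V) : edgeChain x y = edgeChain y x := by
  ext e; simp only [mem_edgeChain, ne_comm, Sym2.eq_swap]

lemma degMod2_edgeChain (x y : V) : degMod2 (edgeChain x y) = boundaryMod2 x y := by
  unfold edgeChain
  split_ifs with hxy
  · rw [hxy, degMod2_empty, boundaryMod2_self]
  ext v
  simp only [degMod2, boundaryMod2, Finset.filter_singleton, Sym2.mem_iff, Pi.add_apply,
    Pi.single_apply]
  split_ifs <;> simp_all

end EdgeChains

namespace SimpleGraph

variable {V : Type*} {G : SimpleGraph V}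

def IsChainIn (G : SimpleGraph V) (s : Set V) (E : Finset (Sym2 V)) : Prop :=
  ∀ e ∈ E, e ∈ G.edgeSet ∧ ∀ v ∈ e, v ∈ s

lemma IsChainIn.empty (s : Set V) : G.IsChainIn s ∅ := by simp [IsChainIn]

lemma IsChainIn.inter {s t : Set V} {E : Finset (Sym2 V)} (hs : G.IsChainIn s E)
    (ht : G.IsChainIn t E) : G.IsChainIn (s ∩ t) E := fun e he =>
  ⟨(hs e he).1, fun v hv => ⟨(hs e he).2 v hv, (ht e he).2 v hv⟩⟩

section Cycles

variable [DecidableEq V]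

lemma IsChainIn.symmDiff {s : Set V} {E F : Finset (Sym2 V)} (hE : G.IsChainIn s E)
    (hF : G.IsChainIn s F) : G.IsChainIn s (E ∆ F) := fun e he =>
  (Finset.mem_union.mp (Finset.symmDiff_subset_union he)).elim (hE e) (hF e)

theorem exists_walk_of_degMod2 {E : Finset (Sym2 V)} (hE : ∀ e ∈ E, e ∈ G.edgeSet) {a b : V}
    (hab : a ≠ b) (hdeg : degMod2 E = boundaryMod2 a b) :
    ∃ w : G.Walk a b, ∀ e ∈ w.edges, e ∈ E := by
  induction E using Finset.strongInduction generalizing a with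
  | H E ih =>
  have hdeg_a : degMod2 E a ≠ 0 := by simp [hdeg, boundaryMod2, hab.symm]
  obtain ⟨e, heE, hae⟩ := exists_mem_of_degMod2_ne_zero hdeg_a
  obtain ⟨x, rfl⟩ : ∃ x, e = s(a, x) := (Sym2.mem_iff_exists).mp hae
  have hadj : G.Adj a x := hE _ heE
  by_cases hxb : x = b
  · subst hxb
    exact ⟨.cons hadj .nil, by simp [heE]⟩
  have herase : E.erase s(a, x) = E ∆ edgeChain a x := by
    ext e
    by_cases he : e = s(a, x) <;> simp [Finset.mem_symmDiff, mem_edgeChain, hadj.ne, he, heE]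
  obtain ⟨w, hw⟩ := ih (E.erase s(a, x)) (Finset.erase_ssubset heE)
    (fun e he => hE e (Finset.mem_of_mem_erase he)) hxb (by
      rw [herase, symmDiff_comm, edgeChain_comm, degMod2_symmDiff, degMod2_edgeChain, hdeg,
        boundaryMod2_add_boundaryMod2])
  refine ⟨.cons hadj w, ?_⟩
  simp only [Walk.edges_cons, List.mem_cons, forall_eq_or_imp]
  exact ⟨heE, fun e he => Finset.mem_of_mem_erase (hw e he)⟩

/-- In the application, `C` is the sum of the relator cells lying in `A` and `D` the sum of the
remaining ones. -/
def IsSplitChain (G : SimpleGraph V) (A B : Set V) (E : Finset (Sym2 V)) : Prop :=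
  ∃ C D : Finset (Sym2 V), E = C ∆ D ∧ degMod2 C = 0 ∧ G.IsChainIn A C ∧ G.IsChainIn B D

lemma IsSplitChain.empty (A B : Set V) : G.IsSplitChain A B ∅ :=
  ⟨∅, ∅, by simp, degMod2_empty, .empty A, .empty B⟩

lemma IsSplitChain.symmDiff {A B : Set V} {E F : Finset (Sym2 V)} (hE : G.IsSplitChain A B E)
    (hF : G.IsSplitChain A B F) : G.IsSplitChain A B (E ∆ F) := by
  obtain ⟨C, D, rfl, hC, hCA, hDB⟩ := hE
  obtain ⟨C', D', rfl, hC', hCA', hDB'⟩ := hF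
  exact ⟨C ∆ C', D ∆ D', symmDiff_symmDiff_symmDiff_comm C D C' D',
    by rw [degMod2_symmDiff, hC, hC', add_zero], hCA.symmDiff hCA', hDB.symmDiff hDB'⟩

/-- The walk is extracted from `C ∆ E = D ∆ F`, which lies in both `A` and `B`. -/
theorem exists_walk_of_isSplitChain {A B : Set V} {a b : V} (hab : a ≠ b)
    {E F : Finset (Sym2 V)} (hE : G.IsChainIn A E) (hF : G.IsChainIn B F)
    (hdeg : degMod2 E = boundaryMod2 a b) (hEF : G.IsSplitChain A B (E ∆ F)) :
    ∃ q : G.Walk a b, ∀ v ∈ q.support, v ∈ A ∩ B := by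
  obtain ⟨C, D, hCD, hC, hCA, hDB⟩ := hEF
  have hz : C ∆ E = D ∆ F := by
    calc C ∆ E = C ∆ (E ∆ F) ∆ F := by rw [← symmDiff_assoc, symmDiff_symmDiff_cancel_right]
      _ = D ∆ F := by rw [hCD, symmDiff_symmDiff_cancel_left]
  have hzAB : G.IsChainIn (A ∩ B) (C ∆ E) := (hCA.symmDiff hE).inter (hz ▸ hDB.symmDiff hF)
  obtain ⟨q, hq⟩ := exists_walk_of_degMod2 (fun e he => (hzAB e he).1) hab
    (by rw [degMod2_symmDiff, hC, hdeg, zero_add])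
  refine ⟨q, fun v hv => ?_⟩
  obtain ⟨e, he, hve⟩ := (q.mem_support_iff_exists_mem_edges_of_not_nil
    (Walk.not_nil_of_ne hab)).mp hv
  exact (hzAB e (hq e he)).2 v hve

end Cycles

lemma Reachable.exists_walk_of_induce {s : Set V} {u v : s} (h : (G.induce s).Reachable u v) :
    ∃ w : G.Walk u v, ∀ x ∈ w.support, x ∈ s := by
  obtain ⟨w⟩ := h
  refine ⟨w.map (Embedding.induce s).toHom, fun x hx => ?_⟩
  obtain ⟨x, -, rfl⟩ := List.mem_map.mp ((Walk.support_map _ w) ▸ hx)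
  exact x.2

lemma reachable_induce_of_adj_succ {s : Set V} {γ : ℤ → V} (hs : ∀ k, γ k ∈ s)
    (hγ : ∀ k, G.Adj (γ k) (γ (k + 1))) (j k : ℤ) :
    (G.induce s).Reachable ⟨γ j, hs j⟩ ⟨γ k, hs k⟩ := by
  have hstep : ∀ k, (G.induce s).Reachable ⟨γ k, hs k⟩ ⟨γ (k + 1), hs (k + 1)⟩ := fun k =>
    (induce_adj.mpr (hγ k)).reachable
  suffices h : ∀ k, (G.induce s).Reachable ⟨γ 0, hs 0⟩ ⟨γ k, hs k⟩ from (h j).symm.trans (h k)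
  intro k
  induction k using Int.induction_on with
  | zero => rfl
  | succ k ih => exact ih.trans (hstep k)
  | pred k ih => exact ih.trans (by simpa using (hstep (-k - 1)).symm)

variable {A : Set V}

lemma ndistSet_le_dist {x a : V} (ha : a ∈ A) : ndistSet G x A ≤ G.dist x a :=
  Nat.sInf_le ⟨a, ha, rfl⟩

lemma ndistSet_eq_zero_of_mem {x : V} (hx : x ∈ A) : ndistSet G x A = 0 := by
  simpa using ndistSet_le_dist (G := G) (x := x) hx

lemma exists_dist_eq_ndistSet (hA : A.Nonempty) (x : V) :
    ∃ a ∈ A, G.dist x a = ndistSet G x A :=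
  Nat.sInf_mem (s := {d : ℕ | ∃ a ∈ A, G.dist x a = d}) (hA.elim fun a ha => ⟨_, a, ha, rfl⟩)

lemma ndistSet_le_add_dist (hG : G.Connected) (hA : A.Nonempty) (x y : V) :
    ndistSet G y A ≤ ndistSet G x A + G.dist x y := by
  obtain ⟨a, ha, hxa⟩ := exists_dist_eq_ndistSet (G := G) hA x
  calc ndistSet G y A ≤ G.dist y a := ndistSet_le_dist ha
    _ ≤ G.dist y x + G.dist x a := hG.dist_triangle
    _ = ndistSet G x A + G.dist x y := by rw [hxa, dist_comm, add_comm]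

lemma exists_walk_to_nearest (hG : G.Connected) (hA : A.Nonempty) (x : V) :
    ∃ a ∈ A, ∃ w : G.Walk x a, ∀ v ∈ w.support, ndistSet G v A ≤ ndistSet G x A := by
  classical
  obtain ⟨a, ha, hxa⟩ := exists_dist_eq_ndistSet (G := G) hA x
  obtain ⟨w, hw⟩ := hG.exists_walk_length_eq_dist x a
  refine ⟨a, ha, w, fun v hv => ?_⟩
  calc ndistSet G v A ≤ G.dist v a := ndistSet_le_dist ha
    _ ≤ (w.dropUntil v hv).length := dist_le _
    _ ≤ w.length := w.length_dropUntil_le_length hv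
    _ = ndistSet G x A := by rw [hw, hxa]

theorem exists_walk_ndistSet_range_le (hG : G.Connected) {γ : ℤ → V}
    (hγ : ∀ k, G.Adj (γ k) (γ (k + 1))) (a b : V) :
    ∃ w : G.Walk a b, ∀ v ∈ w.support,
      ndistSet G v (range γ) ≤ max (ndistSet G a (range γ)) (ndistSet G b (range γ)) := by
  set s := {v | ndistSet G v (range γ) ≤ max (ndistSet G a (range γ)) (ndistSet G b (range γ))}
  have hγs : ∀ k, γ k ∈ s := fun k => by simp [s, ndistSet_eq_zero_of_mem (mem_range_self k)]
  have hnear : ∀ x (hx : x ∈ s), ∃ k, (G.induce s).Reachable ⟨x, hx⟩ ⟨γ k, hγs k⟩ := by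
    intro x hx
    obtain ⟨_, ⟨k, rfl⟩, w, hw⟩ := exists_walk_to_nearest hG (range_nonempty γ) x
    exact ⟨k, ⟨w.induce s fun v hv => (hw v hv).trans hx⟩⟩
  obtain ⟨j, hj⟩ := hnear a (le_max_left (α := ℕ) _ _)
  obtain ⟨k, hk⟩ := hnear b (le_max_right (α := ℕ) _ _)
  exact (hj.trans ((reachable_induce_of_adj_succ hγs hγ j k).trans hk.symm)).exists_walk_of_induce

end SimpleGraph

section Presentation

open SimpleGraph
open scoped Classical

variable {n : ℕ} {Rel : Set (FreeGroup (Fin n))}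

def wordValue (Rel : Set (FreeGroup (Fin n))) (l : List (Fin n × Bool)) : presGroup n Rel :=
  QuotientGroup.mk (FreeGroup.mk l)

lemma coe_eq_one_of_mem {w : FreeGroup (Fin n)} (hw : w ∈ Rel) : (w : presGroup n Rel) = 1 :=
  (QuotientGroup.eq_one_iff w).mpr (Subgroup.subset_normalClosure hw)

lemma wordValue_nil : wordValue Rel [] = 1 := rfl

lemma wordValue_append (l₁ l₂ : List (Fin n × Bool)) :
    wordValue Rel (l₁ ++ l₂) = wordValue Rel l₁ * wordValue Rel l₂ := by
  rw [wordValue, ← FreeGroup.mul_mk, QuotientGroup.mk_mul]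
  rfl

lemma wordValue_cons (t : Fin n × Bool) (l : List (Fin n × Bool)) :
    wordValue Rel (t :: l) = wordValue Rel [t] * wordValue Rel l :=
  wordValue_append [t] l

lemma wordValue_toWord (w : FreeGroup (Fin n)) :
    wordValue Rel w.toWord = (w : presGroup n Rel) := by
  rw [wordValue, FreeGroup.mk_toWord]

lemma wordValue_flip (i : Fin n) (b : Bool) :
    wordValue Rel [(i, !b)] = (wordValue Rel [(i, b)])⁻¹ := by
  rw [wordValue, wordValue, ← QuotientGroup.mk_inv, FreeGroup.inv_mk]
  simp [FreeGroup.invRev]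

lemma presCayley_adj_iff {x y : presGroup n Rel} :
    (presCayley n Rel).Adj x y ↔ x ≠ y ∧ ∃ t, x * wordValue Rel [t] = y := by
  have hof (i : Fin n) :
      (QuotientGroup.mk (FreeGroup.of i) : presGroup n Rel) = wordValue Rel [(i, true)] := rfl
  have hinv (i : Fin n) : wordValue Rel [(i, false)] = (wordValue Rel [(i, true)])⁻¹ :=
    wordValue_flip i true
  simp only [presCayley, cayley, fromRel_adj, presGens, mem_range, hof]
  refine and_congr_right fun _ => ⟨?_, ?_⟩
  · rintro (⟨i, hi⟩ | ⟨i, hi⟩)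
    · exact ⟨(i, true), by rw [hi, mul_inv_cancel_left]⟩
    · exact ⟨(i, false), by rw [hinv, hi]; group⟩
  · rintro ⟨⟨i, _ | _⟩, rfl⟩
    · exact Or.inr ⟨i, by rw [hinv]; group⟩
    · exact Or.inl ⟨i, by group⟩

lemma dist_mul_wordValue_single_le (g : presGroup n Rel) (t : Fin n × Bool) :
    (presCayley n Rel).dist g (g * wordValue Rel [t]) ≤ 1 := by
  by_cases h : g = g * wordValue Rel [t]
  · rw [← h, dist_self]; exact zero_le_one
  · exact (dist_eq_one_iff_adj.mpr (presCayley_adj_iff.mpr ⟨h, t, rfl⟩)).le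

lemma reachable_mul_wordValue (g : presGroup n Rel) (l : List (Fin n × Bool)) :
    (presCayley n Rel).Reachable g (g * wordValue Rel l) := by
  induction l generalizing g with
  | nil => rw [wordValue_nil, mul_one]
  | cons t l ih =>
    rw [wordValue_cons, ← mul_assoc]
    refine Reachable.trans ?_ (ih _)
    by_cases h : g = g * wordValue Rel [t]
    · rw [← h]
    · exact (presCayley_adj_iff.mpr ⟨h, t, rfl⟩).reachable

lemma presCayley_connected : (presCayley n Rel).Connected := by
  refine ⟨fun x y => ?_⟩
  obtain ⟨w, hw⟩ := QuotientGroup.mk_surjective (x⁻¹ * y)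
  simpa [wordValue_toWord, hw] using reachable_mul_wordValue x w.toWord

lemma dist_mul_wordValue_le (g : presGroup n Rel) (l : List (Fin n × Bool)) :
    (presCayley n Rel).dist g (g * wordValue Rel l) ≤ l.length := by
  induction l generalizing g with
  | nil => simp [wordValue_nil]
  | cons t l ih =>
    rw [wordValue_cons, ← mul_assoc, List.length_cons, add_comm]
    exact presCayley_connected.dist_triangle.trans
      (add_le_add (dist_mul_wordValue_single_le g t) (ih _))

/-- The edges traversed by the path that spells `l` from `g`, counted mod 2. -/
noncomputable def wordChain (Rel : Set (FreeGroup (Fin n))) :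
    presGroup n Rel → List (Fin n × Bool) → Finset (Sym2 (presGroup n Rel))
  | _, [] => ∅
  | g, t :: l => edgeChain g (g * wordValue Rel [t]) ∆ wordChain Rel (g * wordValue Rel [t]) l

lemma wordChain_append (g : presGroup n Rel) (l₁ l₂ : List (Fin n × Bool)) :
    wordChain Rel g (l₁ ++ l₂) = wordChain Rel g l₁ ∆ wordChain Rel (g * wordValue Rel l₁) l₂ := by
  induction l₁ generalizing g with
  | nil =>
    rw [List.nil_append, wordValue_nil, mul_one, wordChain]
    exact (bot_symmDiff _).symm
  | cons t l ih => rw [List.cons_append, wordChain, wordChain, ih, wordValue_cons t l, mul_assoc,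
      symmDiff_assoc]

lemma wordChain_cancel (g : presGroup n Rel) (i : Fin n) (b : Bool) (l : List (Fin n × Bool)) :
    wordChain Rel g ((i, b) :: (i, !b) :: l) = wordChain Rel g l := by
  rw [wordChain, wordChain, wordValue_flip, mul_inv_cancel_right, edgeChain_comm,
    symmDiff_symmDiff_cancel_left]

lemma wordChain_eq_of_red {l l' : List (Fin n × Bool)} (h : FreeGroup.Red l l')
    (g : presGroup n Rel) : wordChain Rel g l = wordChain Rel g l' := by
  induction h with
  | refl => rfl
  | tail _ hstep ih =>
    obtain ⟨L₁, L₂, i, b⟩ := hstep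
    rw [ih, wordChain_append, wordChain_append, wordChain_cancel]

lemma degMod2_wordChain (g : presGroup n Rel) (l : List (Fin n × Bool)) :
    degMod2 (wordChain Rel g l) = boundaryMod2 g (g * wordValue Rel l) := by
  induction l generalizing g with
  | nil => rw [wordChain, degMod2_empty, wordValue_nil, mul_one, boundaryMod2_self]
  | cons t l ih =>
    rw [wordChain, degMod2_symmDiff, ih, degMod2_edgeChain, boundaryMod2_add_boundaryMod2,
      wordValue_cons t l, mul_assoc]

lemma mem_edgeSet_of_mem_wordChain {g : presGroup n Rel} {l : List (Fin n × Bool)}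
    {e : Sym2 (presGroup n Rel)} (he : e ∈ wordChain Rel g l) : e ∈ (presCayley n Rel).edgeSet := by
  induction l generalizing g with
  | nil => simp [wordChain] at he
  | cons t l ih =>
    rcases Finset.mem_symmDiff.mp he with ⟨he, -⟩ | ⟨he, -⟩
    · obtain ⟨hne, rfl⟩ := mem_edgeChain.mp he
      exact presCayley_adj_iff.mpr ⟨hne, t, rfl⟩
    · exact ih he

lemma exists_prefix_of_mem_wordChain {g : presGroup n Rel} {l : List (Fin n × Bool)}
    {e : Sym2 (presGroup n Rel)} (he : e ∈ wordChain Rel g l) {v : presGroup n Rel} (hv : v ∈ e) :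
    ∃ l₁, l₁ <+: l ∧ v = g * wordValue Rel l₁ := by
  induction l generalizing g with
  | nil => simp [wordChain] at he
  | cons t l ih =>
    rcases Finset.mem_symmDiff.mp he with ⟨he, -⟩ | ⟨he, -⟩
    · obtain ⟨-, rfl⟩ := mem_edgeChain.mp he
      rcases Sym2.mem_iff.mp hv with rfl | rfl
      · exact ⟨[], List.nil_prefix, by rw [wordValue_nil, mul_one]⟩
      · exact ⟨[t], List.cons_prefix_cons.mpr ⟨rfl, List.nil_prefix⟩, rfl⟩
    · obtain ⟨l₁, hl₁, rfl⟩ := ih he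
      exact ⟨t :: l₁, List.cons_prefix_cons.mpr ⟨rfl, hl₁⟩, by rw [wordValue_cons t l₁, mul_assoc]⟩

lemma dist_le_length_of_mem_wordChain {g : presGroup n Rel} {l : List (Fin n × Bool)}
    {e e' : Sym2 (presGroup n Rel)} (he : e ∈ wordChain Rel g l) (he' : e' ∈ wordChain Rel g l)
    {u v : presGroup n Rel} (hu : u ∈ e) (hv : v ∈ e') :
    (presCayley n Rel).dist u v ≤ l.length := by
  obtain ⟨l₁, hl₁, rfl⟩ := exists_prefix_of_mem_wordChain he hu
  obtain ⟨l₂, hl₂, rfl⟩ := exists_prefix_of_mem_wordChain he' hv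
  clear he he' hu hv
  wlog h : l₁ <+: l₂ generalizing l₁ l₂
  · rw [dist_comm]
    exact this l₂ hl₂ l₁ hl₁ ((List.prefix_or_prefix_of_prefix hl₁ hl₂).resolve_left h)
  obtain ⟨l₃, rfl⟩ := h
  rw [wordValue_append, ← mul_assoc]
  exact (dist_mul_wordValue_le _ l₃).trans
    (List.IsSuffix.length_le (List.suffix_append l₁ l₃) |>.trans hl₂.length_le)

noncomputable def chainOf (Rel : Set (FreeGroup (Fin n))) (g : presGroup n Rel)
    (w : FreeGroup (Fin n)) : Finset (Sym2 (presGroup n Rel)) :=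
  wordChain Rel g w.toWord

lemma wordChain_eq_chainOf (g : presGroup n Rel) (l : List (Fin n × Bool)) :
    wordChain Rel g l = chainOf Rel g (FreeGroup.mk l) := by
  rw [chainOf, FreeGroup.toWord_mk]
  exact wordChain_eq_of_red FreeGroup.reduce.red g

lemma chainOf_mul (g : presGroup n Rel) (u v : FreeGroup (Fin n)) :
    chainOf Rel g (u * v) = chainOf Rel g u ∆ chainOf Rel (g * u) v := by
  rw [← FreeGroup.mk_toWord (x := u), ← FreeGroup.mk_toWord (x := v), FreeGroup.mul_mk,
    ← wordChain_eq_chainOf, wordChain_append, wordValue_toWord, FreeGroup.mk_toWord,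
    FreeGroup.mk_toWord]
  rfl

lemma chainOf_one (g : presGroup n Rel) : chainOf Rel g 1 = ∅ := by
  rw [chainOf, FreeGroup.toWord_one]
  rfl

lemma chainOf_inv (g : presGroup n Rel) (u : FreeGroup (Fin n)) :
    chainOf Rel g u⁻¹ = chainOf Rel (g * ↑u⁻¹) u := by
  have h := chainOf_mul g u⁻¹ u
  rw [inv_mul_cancel, chainOf_one] at h
  exact symmDiff_eq_bot.mp h.symm

lemma chainOf_conj (g : presGroup n Rel) (c : FreeGroup (Fin n)) {w : FreeGroup (Fin n)}
    (hw : (w : presGroup n Rel) = 1) :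
    chainOf Rel g (c * w * c⁻¹) = chainOf Rel (g * c) w := by
  rw [chainOf_mul, chainOf_mul, chainOf_inv, QuotientGroup.mk_mul, hw, mul_one,
    QuotientGroup.mk_inv, mul_inv_cancel_right, symmDiff_assoc, symmDiff_comm _ (chainOf Rel g c),
    symmDiff_symmDiff_cancel_left]

lemma degMod2_chainOf_of_eq_one (g : presGroup n Rel) {w : FreeGroup (Fin n)}
    (hw : (w : presGroup n Rel) = 1) : degMod2 (chainOf Rel g w) = 0 := by
  rw [chainOf, degMod2_wordChain, wordValue_toWord, hw, mul_one, boundaryMod2_self]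

lemma isSplitChain_chainOf_of_mem_normalClosure {A B : Set (presGroup n Rel)}
    (hcell : ∀ g, ∀ w ∈ Rel, (presCayley n Rel).IsSplitChain A B (chainOf Rel g w))
    {w : FreeGroup (Fin n)} (hw : w ∈ Subgroup.normalClosure Rel) (g : presGroup n Rel) :
    (presCayley n Rel).IsSplitChain A B (chainOf Rel g w) := by
  induction hw using Subgroup.closure_induction generalizing g with
  | mem x hx =>
    obtain ⟨w, hw, hconj⟩ := Group.mem_conjugatesOfSet_iff.mp hx
    obtain ⟨c, rfl⟩ := isConj_iff.mp hconj
    rw [chainOf_conj g c (coe_eq_one_of_mem hw)]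
    exact hcell _ w hw
  | one => rw [chainOf_one]; exact .empty A B
  | mul x y hx _ ihx ihy =>
    rw [chainOf_mul]
    exact (ihx g).symmDiff (ihy _)
  | inv x _ ihx =>
    rw [chainOf_inv]
    exact ihx _

lemma isSplitChain_chainOf_of_length_le {height : presGroup n Rel → ℕ}
    (hheight : ∀ x y, height y ≤ height x + (presCayley n Rel).dist x y) (r ε₀ : ℕ)
    {w : FreeGroup (Fin n)} (hw : (w : presGroup n Rel) = 1) (hlen : w.toWord.length ≤ ε₀)
    (g : presGroup n Rel) :
    (presCayley n Rel).IsSplitChain {x | r ≤ height x} {x | height x ≤ r + ε₀}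
      (chainOf Rel g w) := by
  have hedges : ∀ e ∈ chainOf Rel g w, e ∈ (presCayley n Rel).edgeSet := fun _ he =>
    mem_edgeSet_of_mem_wordChain he
  by_cases hhigh : ∀ e ∈ chainOf Rel g w, ∀ v ∈ e, r ≤ height v
  · exact ⟨chainOf Rel g w, ∅, (symmDiff_bot _).symm, degMod2_chainOf_of_eq_one g hw,
      fun e he => ⟨hedges e he, hhigh e he⟩, .empty _⟩
  push Not at hhigh
  obtain ⟨e, he, u, hu, hlow⟩ := hhigh
  refine ⟨∅, chainOf Rel g w, (bot_symmDiff _).symm, degMod2_empty, .empty _,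
    fun e' he' => ⟨hedges e' he', fun v hv => ?_⟩⟩
  have := hheight u v
  have := dist_le_length_of_mem_wordChain he he' hu hv
  change height v ≤ r + ε₀
  omega

noncomputable def wordOfWalk :
    ∀ {x y : presGroup n Rel}, (presCayley n Rel).Walk x y → List (Fin n × Bool)
  | _, _, .nil => []
  | _, _, .cons h w => (presCayley_adj_iff.mp h).2.choose :: wordOfWalk w

lemma mul_wordValue_wordOfWalk {x y : presGroup n Rel} (w : (presCayley n Rel).Walk x y) :
    x * wordValue Rel (wordOfWalk w) = y := by
  induction w with
  | nil => rw [wordOfWalk, wordValue_nil, mul_one]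
  | cons h w ih =>
    rw [wordOfWalk, wordValue_cons, ← mul_assoc, (presCayley_adj_iff.mp h).2.choose_spec, ih]

lemma mem_edges_of_mem_wordChain_wordOfWalk {x y : presGroup n Rel}
    (w : (presCayley n Rel).Walk x y) {e : Sym2 (presGroup n Rel)}
    (he : e ∈ wordChain Rel x (wordOfWalk w)) : e ∈ w.edges := by
  induction w with
  | nil => simp [wordOfWalk, wordChain] at he
  | cons h w ih =>
    rw [wordOfWalk, wordChain, (presCayley_adj_iff.mp h).2.choose_spec] at he
    rw [Walk.edges_cons, List.mem_cons]
    rcases Finset.mem_symmDiff.mp he with ⟨he, -⟩ | ⟨he, -⟩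
    · exact Or.inl (mem_edgeChain.mp he).2
    · exact Or.inr (ih he)

lemma isChainIn_wordChain_wordOfWalk {s : Set (presGroup n Rel)} {x y : presGroup n Rel}
    (w : (presCayley n Rel).Walk x y) (hw : ∀ v ∈ w.support, v ∈ s) :
    (presCayley n Rel).IsChainIn s (wordChain Rel x (wordOfWalk w)) := by
  refine fun e he => ⟨mem_edgeSet_of_mem_wordChain he, fun v hv => hw v ?_⟩
  obtain ⟨u, rfl⟩ := Sym2.mem_iff_exists.mp hv
  exact w.fst_mem_support_of_mem_edges (mem_edges_of_mem_wordChain_wordOfWalk w he)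

/-- The chains of `p` and `p'` differ by the chain of a word in the normal closure of the
relators, that is, by a sum of translated relator cells. -/
theorem exists_walk_of_forall_isSplitChain {A B : Set (presGroup n Rel)}
    (hcell : ∀ g, ∀ w ∈ Rel, (presCayley n Rel).IsSplitChain A B (chainOf Rel g w))
    {a b : presGroup n Rel} (hab : a ≠ b) (p p' : (presCayley n Rel).Walk a b)
    (hp : ∀ v ∈ p.support, v ∈ A) (hp' : ∀ v ∈ p'.support, v ∈ B) :
    ∃ q : (presCayley n Rel).Walk a b, ∀ v ∈ q.support, v ∈ A ∩ B := by
  have hval : wordValue Rel (wordOfWalk p) = wordValue Rel (wordOfWalk p') := by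
    rw [← mul_right_inj a, mul_wordValue_wordOfWalk, mul_wordValue_wordOfWalk]
  set u := FreeGroup.mk (wordOfWalk p)
  set u' := FreeGroup.mk (wordOfWalk p')
  have hmem : u * u'⁻¹ ∈ Subgroup.normalClosure Rel := by
    rw [← QuotientGroup.eq_one_iff, QuotientGroup.mk_mul, QuotientGroup.mk_inv]
    exact mul_inv_eq_one.mpr hval
  have hdiff : wordChain Rel a (wordOfWalk p) ∆ wordChain Rel a (wordOfWalk p') =
      chainOf Rel a (u * u'⁻¹) := by
    rw [chainOf_mul, chainOf_inv, wordChain_eq_chainOf, wordChain_eq_chainOf,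
      QuotientGroup.mk_inv, ← wordValue, ← wordValue, hval, mul_inv_cancel_right]
  exact exists_walk_of_isSplitChain hab (isChainIn_wordChain_wordOfWalk p hp)
    (isChainIn_wordChain_wordOfWalk p' hp')
    (by rw [degMod2_wordChain, mul_wordValue_wordOfWalk])
    (hdiff ▸ isSplitChain_chainOf_of_mem_normalClosure hcell hmem a)

end Presentation

theorem constant_height_paths_general (n : ℕ) (Rel : Set (FreeGroup (Fin n)))
    (ε₀ : ℕ) (hε₀ : ∀ w ∈ Rel, (FreeGroup.toWord w).length ≤ ε₀)
    (γ : ℤ → presGroup n Rel)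
    (hγ : ∀ m k : ℤ, ((presCayley n Rel).dist (γ m) (γ k) : ℤ) = |m - k|)
    (r : ℕ) (a b : presGroup n Rel)
    (ha : ndistSet (presCayley n Rel) a (Set.range γ) = r)
    (hb : ndistSet (presCayley n Rel) b (Set.range γ) = r)
    (p : (presCayley n Rel).Walk a b)
    (hp : ∀ x ∈ p.support,
      (r : ℤ) - 1 < (ndistSet (presCayley n Rel) x (Set.range γ) : ℤ)) :
    ∃ q : (presCayley n Rel).Walk a b, ∀ x ∈ q.support,
      (r : ℤ) - ε₀ ≤ (ndistSet (presCayley n Rel) x (Set.range γ) : ℤ) ∧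
      (ndistSet (presCayley n Rel) x (Set.range γ) : ℤ) ≤ (r : ℤ) + ε₀ := by
  rcases eq_or_ne a b with rfl | hab
  · refine ⟨.nil, fun x hx => ?_⟩
    rw [List.mem_singleton.mp hx, ha]
    omega
  have hγadj (k : ℤ) : (presCayley n Rel).Adj (γ k) (γ (k + 1)) := by
    simpa using hγ k (k + 1)
  obtain ⟨p', hp'⟩ := SimpleGraph.exists_walk_ndistSet_range_le presCayley_connected hγadj a b
  obtain ⟨q, hq⟩ := exists_walk_of_forall_isSplitChain
    (fun g w hw => isSplitChain_chainOf_of_length_le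
      (SimpleGraph.ndistSet_le_add_dist presCayley_connected (range_nonempty γ)) r ε₀
      (coe_eq_one_of_mem hw) (hε₀ w hw) g)
    hab p p' (fun x hx => show r ≤ _ by have := hp x hx; omega)
    (fun x hx => show _ ≤ r + ε₀ by have := hp' x hx; omega)
  refine ⟨q, fun x hx => ?_⟩
  have h₁ : r ≤ ndistSet (presCayley n Rel) x (range γ) := (hq x hx).1
  have h₂ : ndistSet (presCayley n Rel) x (range γ) ≤ r + ε₀ := (hq x hx).2
  omega

/-- Constant-height paths: in the Cayley graph of a finite presentation with longest
relator of length `ε₀`, if `a, b` lie at distance `r` from a bi-infinite geodesic `γ`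
and are joined by a path disjoint from `N_{r-1}(γ)`, then they are joined by a path in
the annulus `A_{r ± ε₀}(γ)`. -/
theorem constant_height_paths (n : ℕ) (Rel : Set (FreeGroup (Fin n))) (hRel : Rel.Finite)
    (ε₀ : ℕ) (hε₀ : ∀ w ∈ Rel, (FreeGroup.toWord w).length ≤ ε₀)
    (γ : ℤ → presGroup n Rel)
    (hγ : ∀ m k : ℤ, ((presCayley n Rel).dist (γ m) (γ k) : ℤ) = |m - k|)
    (r : ℕ) (a b : presGroup n Rel)
    (ha : ndistSet (presCayley n Rel) a (Set.range γ) = r)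
    (hb : ndistSet (presCayley n Rel) b (Set.range γ) = r)
    (p : (presCayley n Rel).Walk a b)
    (hp : ∀ x ∈ p.support,
      (r : ℤ) - 1 < (ndistSet (presCayley n Rel) x (Set.range γ) : ℤ)) :
    ∃ q : (presCayley n Rel).Walk a b, ∀ x ∈ q.support,
      (r : ℤ) - ε₀ ≤ (ndistSet (presCayley n Rel) x (Set.range γ) : ℤ) ∧
      (ndistSet (presCayley n Rel) x (Set.range γ) : ℤ) ≤ (r : ℤ) + ε₀ :=
  constant_height_paths_general n Rel ε₀ hε₀ γ hγ r a b ha hb p hp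
end
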